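/- arXiv:1910.13618 — 10 statements merged into one kernel-verified Lean document; each statement's English description precedes it below -/
import Mathlib

section
/- Let 1 < p < ∞ and let r be a positive integer, and set k = 2^r − 1. For every real α with α < (k+1)^{1−1/p} there exists a matrix A ∈ ℝ^{(k+1)×(k+1)} such that inf{ ‖A − X‖_p : rank(X) ≤ k } > 0, and such that for every k-element tuple J of distinct column indices of A and every Y ∈ ℝ^{k×(k+1)}, ‖A − A_J Y‖_p ≥ α · inf{ ‖A − X‖_p : X ∈ ℝ^{(k+1)×(k+1)}, rank(X) ≤ k }. -/
/-- Entry-wise ℓp norm of a real matrix. -/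
noncomputable def lpNorm {n m : ℕ} (p : ℝ) (A : Matrix (Fin n) (Fin m) ℝ) : ℝ :=
  (∑ i, ∑ j, |A i j| ^ p) ^ (1 / p)

/-!
Let `H` be a Hadamard matrix of order `n = k + 1` (Sylvester's construction gives one for
`n = 2 ^ r`) and `A = diag(1, ε⁻¹, …, ε⁻¹) H`. Deleting the first row of `A` is a rank-`k`
approximation of cost `n ^ (1/p)`. A selection of `k` columns misses some column `j₀`, and the
dual vector `z = diag(1, ε, …, ε) H e_{j₀}` satisfies `zᵀ A = n e_{j₀}ᵀ`, so it kills the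
selected columns and `zᵀ (A - A_J Y) e_{j₀} = n`. Hölder's inequality then gives
`‖A - A_J Y‖_p ≥ n / ‖z‖_q = n (1 + k ε ^ q) ^ (-1/q)`, which tends to `n` as `ε → 0`: the
ratio of the two errors approaches `n ^ (1 - 1/p)`. The rank-`k` error is positive because `A` is
invertible and the determinant is continuous.
-/

open Finset Matrix

theorem Real.abs_inner_le_Lp_mul_Lq {ι : Type*} (s : Finset ι) (f g : ι → ℝ) {p q : ℝ}
    (hpq : p.HolderConjugate q) :
    |∑ i ∈ s, f i * g i| ≤ (∑ i ∈ s, |f i| ^ p) ^ (1 / p) * (∑ i ∈ s, |g i| ^ q) ^ (1 / q) :=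
  (abs_sum_le_sum_abs _ _).trans (by simpa using Real.Lr_rpow_le_Lp_mul_Lq s f g hpq)

section lpNorm

variable {n m : ℕ} {p : ℝ}

theorem lpNorm_nonneg (p : ℝ) (M : Matrix (Fin n) (Fin m) ℝ) : 0 ≤ lpNorm p M := by
  unfold lpNorm; positivity

theorem lpNorm_col_le_lpNorm (hp : 0 < p) (M : Matrix (Fin n) (Fin m) ℝ) (j : Fin m) :
    (∑ i, |M i j| ^ p) ^ (1 / p) ≤ lpNorm p M := by
  unfold lpNorm
  gcongr with i
  exact single_le_sum (f := fun j => |M i j| ^ p) (fun _ _ => by positivity) (mem_univ j)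

theorem abs_apply_le_lpNorm (hp : 0 < p) (M : Matrix (Fin n) (Fin m) ℝ) (i : Fin n)
    (j : Fin m) : |M i j| ≤ lpNorm p M := by
  calc |M i j| = (|M i j| ^ p) ^ (1 / p) := by
        rw [← Real.rpow_mul (abs_nonneg _), mul_one_div_cancel hp.ne', Real.rpow_one]
    _ ≤ (∑ i', |M i' j| ^ p) ^ (1 / p) := by
        gcongr
        exact single_le_sum (f := fun i' => |M i' j| ^ p) (fun _ _ => by positivity) (mem_univ i)
    _ ≤ lpNorm p M := lpNorm_col_le_lpNorm hp M j

theorem lpNorm_sub_updateRow_zero (hp : 0 < p) (A : Matrix (Fin n) (Fin m) ℝ) (i₀ : Fin n) :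
    lpNorm p (A - A.updateRow i₀ 0) = (∑ j, |A i₀ j| ^ p) ^ (1 / p) := by
  unfold lpNorm
  congr 1
  rw [sum_eq_single i₀ (fun i _ hi => by simp [updateRow_ne hi, Real.zero_rpow hp.ne'])
    (by simp)]
  simp

theorem abs_vecMul_apply_le_lpNorm_mul {q : ℝ} (hpq : p.HolderConjugate q)
    (M : Matrix (Fin n) (Fin m) ℝ) (z : Fin n → ℝ) (j : Fin m) :
    |(z ᵥ* M) j| ≤ lpNorm p M * (∑ i, |z i| ^ q) ^ (1 / q) := by
  calc |(z ᵥ* M) j| = |∑ i, M i j * z i| := by simp [vecMul, dotProduct, mul_comm]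
    _ ≤ (∑ i, |M i j| ^ p) ^ (1 / p) * (∑ i, |z i| ^ q) ^ (1 / q) :=
        Real.abs_inner_le_Lp_mul_Lq _ _ _ hpq
    _ ≤ lpNorm p M * (∑ i, |z i| ^ q) ^ (1 / q) := by
        gcongr
        exact lpNorm_col_le_lpNorm hpq.pos M j

end lpNorm

theorem Matrix.det_eq_zero_of_rank_lt {n : ℕ} {X : Matrix (Fin n) (Fin n) ℝ} (h : X.rank < n) :
    X.det = 0 := by
  by_contra hX
  simp [rank_of_det_ne_zero hX] at h

theorem Matrix.rank_updateRow_zero_le {k m : ℕ} (A : Matrix (Fin (k + 1)) (Fin m) ℝ)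
    (i₀ : Fin (k + 1)) : (A.updateRow i₀ 0).rank ≤ k := by
  refine (rank_le_card_of_support_subset _ (univ.erase i₀) fun i hi => ?_).trans (by simp)
  simp only [mem_coe, mem_erase, mem_univ, and_true]
  rintro rfl
  exact hi (by simp [row])

attribute [local instance] Matrix.normedAddCommGroup in
theorem exists_pos_le_lpNorm_sub_of_det_ne_zero {n : ℕ} {p : ℝ} (hp : 0 < p)
    {A : Matrix (Fin n) (Fin n) ℝ} (hA : A.det ≠ 0) :
    ∃ δ > 0, ∀ X : Matrix (Fin n) (Fin n) ℝ, X.det = 0 → δ ≤ lpNorm p (A - X) := by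
  have hcont : ContinuousAt (fun X : Matrix (Fin n) (Fin n) ℝ => X.det) A :=
    continuous_id.matrix_det.continuousAt
  obtain ⟨δ, hδ, hdet⟩ := Metric.continuousAt_iff.mp hcont _ (abs_pos.mpr hA)
  refine ⟨δ, hδ, fun X hX => le_of_not_gt fun hlt => ?_⟩
  have hclose : dist X A < δ := by
    rw [dist_eq_norm, norm_lt_iff hδ]
    intro i j
    rw [Real.norm_eq_abs, ← neg_sub, neg_apply, abs_neg]
    exact (abs_apply_le_lpNorm hp (A - X) i j).trans_lt hlt
  simpa [hX, Real.dist_eq] using hdet hclose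

theorem vecMul_sub_submatrix_mul {α m n l : Type*} [Ring α] [Fintype m] [Fintype l]
    (A : Matrix m n α) (J : l → n) (Y : Matrix l n α) (z : m → α)
    (hz : ∀ t, (z ᵥ* A) (J t) = 0) :
    z ᵥ* (A - A.submatrix id J * Y) = z ᵥ* A := by
  have hzJ : z ᵥ* A.submatrix id J = 0 := funext hz
  rw [vecMul_sub, ← vecMul_vecMul, hzJ, zero_vecMul, sub_zero]

theorem Matrix.IsHadamard.abs_apply {n : Type*} [Fintype n] [DecidableEq n]
    {H : Matrix n n ℝ} (hH : H.IsHadamard) (i j : n) : |H i j| = 1 := by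
  rcases Unitary.mem_iff_eq_one_or_eq_neg_one.mp (hH.apply_mem i j) with h | h <;> simp [h]

theorem Matrix.IsHadamard.vecMul_diagonal_mul {n : Type*} [Fintype n] [DecidableEq n]
    {H : Matrix n n ℝ} (hH : H.IsHadamard) {d : n → ℝ} (hd : ∀ i, d i ≠ 0) (j₀ : n) :
    (fun i => H i j₀ / d i) ᵥ* (diagonal d * H) = Pi.single j₀ (Fintype.card n : ℝ) := by
  have hcol : (fun i => H i j₀) ᵥ* H = (Hᵀ * H) j₀ := rfl
  have hdiag : (fun i => H i j₀ / d i) ᵥ* diagonal d = fun i => H i j₀ :=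
    funext fun i => by rw [vecMul_diagonal, div_mul_cancel₀ _ (hd i)]
  rw [← vecMul_vecMul, hdiag, hcol, ← conjTranspose_eq_transpose_of_trivial,
    hH.conjTranspose_mul]
  ext j
  simp [Pi.single_apply, one_apply, eq_comm]

theorem Matrix.exists_isHadamard_of_eq_two_pow {N r : ℕ} (hN : N = 2 ^ r) :
    ∃ H : Matrix (Fin N) (Fin N) ℝ, H.IsHadamard := by
  subst hN
  induction r with
  | zero => exact ⟨1, by simp [isHadamard_iff]⟩
  | succ r ih =>
    obtain ⟨H, hH⟩ := ih
    have hbase : (!![1, 1; 1, -1] : Matrix (Fin 2) (Fin 2) ℝ).IsHadamard := by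
      refine ⟨fun i j => ?_, ?_, ?_⟩
      · rw [Unitary.mem_iff_eq_one_or_eq_neg_one]
        fin_cases i <;> fin_cases j <;> simp
      all_goals
        ext i j
        fin_cases i <;> fin_cases j <;> simp [Matrix.mul_apply, Fin.sum_univ_two] <;> norm_num
    let e : Fin (2 ^ r) × Fin 2 ≃ Fin (2 ^ (r + 1)) :=
      finProdFinEquiv.trans (finCongr (pow_succ 2 r).symm)
    exact ⟨_, (hH.kronecker hbase).reindex e e⟩

noncomputable def lowRankError {n m : ℕ} (p : ℝ) (k : ℕ) (A : Matrix (Fin n) (Fin m) ℝ) :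
    ℝ :=
  sInf {c : ℝ | ∃ X : Matrix (Fin n) (Fin m) ℝ, X.rank ≤ k ∧ c = lpNorm p (A - X)}

section lowRankError

variable {n m k : ℕ} {p : ℝ} {A : Matrix (Fin n) (Fin m) ℝ}

theorem lowRankError_le_lpNorm_sub {X : Matrix (Fin n) (Fin m) ℝ} (hX : X.rank ≤ k) :
    lowRankError p k A ≤ lpNorm p (A - X) :=
  csInf_le ⟨0, by rintro _ ⟨X, -, rfl⟩; exact lpNorm_nonneg p _⟩ ⟨X, hX, rfl⟩

theorem le_lowRankError {δ : ℝ}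
    (h : ∀ X : Matrix (Fin n) (Fin m) ℝ, X.rank ≤ k → δ ≤ lpNorm p (A - X)) :
    δ ≤ lowRankError p k A :=
  le_csInf ⟨_, 0, by simp, rfl⟩ (by rintro _ ⟨X, hX, rfl⟩; exact h X hX)

theorem lowRankError_pos_of_det_ne_zero (hp : 0 < p) {A : Matrix (Fin (k + 1)) (Fin (k + 1)) ℝ}
    (hA : A.det ≠ 0) : 0 < lowRankError p k A := by
  obtain ⟨δ, hδ, hδA⟩ := exists_pos_le_lpNorm_sub_of_det_ne_zero hp hA
  exact hδ.trans_le <| le_lowRankError fun X hX =>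
    hδA X (det_eq_zero_of_rank_lt (Nat.lt_succ_of_le hX))

end lowRankError

theorem exists_pos_mul_rpow_one_add_lt {a b c q : ℝ} (hq : 0 < q) (h : a < b) :
    ∃ ε > 0, a * (1 + c * ε ^ q) ^ (1 / q) < b := by
  have hcont : ContinuousAt (fun ε : ℝ => a * (1 + c * ε ^ q) ^ (1 / q)) 0 := by
    fun_prop (disch := positivity)
  have h0 : a * (1 + c * (0 : ℝ) ^ q) ^ (1 / q) < b := by
    simpa [Real.zero_rpow hq.ne'] using h
  obtain ⟨ε, hεb, hε⟩ :=
    ((hcont.eventually (gt_mem_nhds h0)).filter_mono nhdsWithin_le_nhds |>.and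
      (self_mem_nhdsWithin (s := Set.Ioi 0))).exists
  exact ⟨ε, hε, hεb⟩

noncomputable def scaledHadamard {k : ℕ} (H : Matrix (Fin (k + 1)) (Fin (k + 1)) ℝ) (ε : ℝ) :
    Matrix (Fin (k + 1)) (Fin (k + 1)) ℝ :=
  diagonal (Function.update (fun _ => ε⁻¹) 0 1) * H

section scaledHadamard

variable {k : ℕ} {H : Matrix (Fin (k + 1)) (Fin (k + 1)) ℝ} {ε p : ℝ}

theorem scaledHadamard_det_ne_zero (hH : H.IsHadamard) (hε : ε ≠ 0) :
    (scaledHadamard H ε).det ≠ 0 := by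
  rw [scaledHadamard, det_mul, det_diagonal, Fin.prod_univ_succ]
  simp [hε, hH.det_ne_zero (by positivity)]

theorem lowRankError_scaledHadamard_le (hH : H.IsHadamard) (hp : 0 < p) :
    lowRankError p k (scaledHadamard H ε) ≤ ((k : ℝ) + 1) ^ (1 / p) := by
  refine (lowRankError_le_lpNorm_sub
    (rank_updateRow_zero_le (scaledHadamard H ε) 0)).trans_eq ?_
  rw [lpNorm_sub_updateRow_zero hp]
  simp [scaledHadamard, hH.abs_apply]

theorem le_lpNorm_scaledHadamard_sub_submatrix_mul (hH : H.IsHadamard) (hε : 0 < ε) {q : ℝ}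
    (hpq : p.HolderConjugate q) (J : Fin k → Fin (k + 1))
    (Y : Matrix (Fin k) (Fin (k + 1)) ℝ) :
    (k : ℝ) + 1 ≤ lpNorm p (scaledHadamard H ε - (scaledHadamard H ε).submatrix id J * Y) *
      (1 + k * ε ^ q) ^ (1 / q) := by
  obtain ⟨j₀, hj₀⟩ : ∃ j₀, j₀ ∉ Set.range J := by
    by_contra! h
    simpa using Fintype.card_le_of_surjective J (Set.range_eq_univ.mp (Set.eq_univ_of_forall h))
  set d : Fin (k + 1) → ℝ := Function.update (fun _ => ε⁻¹) 0 1
  have hd : ∀ i, d i ≠ 0 := fun i => by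
    by_cases hi : i = 0 <;> simp [d, hi, hε.ne']
  set z : Fin (k + 1) → ℝ := fun i => H i j₀ / d i
  have hz : z ᵥ* scaledHadamard H ε = Pi.single j₀ ((k : ℝ) + 1) :=
    (hH.vecMul_diagonal_mul hd j₀).trans (by simp)
  have hres := vecMul_sub_submatrix_mul (scaledHadamard H ε) J Y z fun t => by
    simp [hz, show J t ≠ j₀ from fun h => hj₀ ⟨t, h⟩]
  have hzq : ∑ i, |z i| ^ q = 1 + k * ε ^ q := by
    simp [z, d, Fin.sum_univ_succ, abs_div, hH.abs_apply, abs_of_pos hε]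
  simpa [hres, hz, hzq, abs_of_pos (by positivity : (0 : ℝ) < k + 1)] using
    abs_vecMul_apply_le_lpNorm_mul hpq
      (scaledHadamard H ε - (scaledHadamard H ε).submatrix id J * Y) z j₀

end scaledHadamard

theorem Matrix.IsHadamard.exists_column_subset_selection_lower_bound {k : ℕ}
    {H : Matrix (Fin (k + 1)) (Fin (k + 1)) ℝ} (hH : H.IsHadamard) {p : ℝ} (hp : 1 < p) {α : ℝ}
    (hα : α < ((k : ℝ) + 1) ^ (1 - 1 / p)) :
    ∃ A : Matrix (Fin (k + 1)) (Fin (k + 1)) ℝ, 0 < lowRankError p k A ∧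
      ∀ (J : Fin k → Fin (k + 1)) (Y : Matrix (Fin k) (Fin (k + 1)) ℝ),
        α * lowRankError p k A ≤ lpNorm p (A - A.submatrix id J * Y) := by
  have hpq : p.HolderConjugate p.conjExponent := .conjExponent hp
  set q := p.conjExponent
  obtain ⟨ε, hε, hεα⟩ := exists_pos_mul_rpow_one_add_lt (c := k) hpq.symm.pos
    (max_lt hα (by positivity) : max α 0 < ((k : ℝ) + 1) ^ (1 - 1 / p))
  have hpos := lowRankError_pos_of_det_ne_zero (k := k) hpq.pos
    (scaledHadamard_det_ne_zero hH hε.ne')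
  refine ⟨scaledHadamard H ε, hpos, fun J Y => ?_⟩
  have hZ : 0 < (1 + k * ε ^ q) ^ (1 / q) := by positivity
  have hsplit : ((k : ℝ) + 1) ^ (1 / p) * ((k : ℝ) + 1) ^ (1 - 1 / p) = k + 1 := by
    rw [← Real.rpow_add (by positivity), add_sub_cancel, Real.rpow_one]
  calc α * lowRankError p k (scaledHadamard H ε)
      ≤ max α 0 * lowRankError p k (scaledHadamard H ε) := by gcongr; exact le_max_left _ _
    _ ≤ max α 0 * ((k : ℝ) + 1) ^ (1 / p) := by
        gcongr; exact lowRankError_scaledHadamard_le hH hpq.pos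
    _ ≤ lpNorm p (scaledHadamard H ε - (scaledHadamard H ε).submatrix id J * Y) := by
        rw [← mul_le_mul_iff_of_pos_right hZ]
        calc max α 0 * ((k : ℝ) + 1) ^ (1 / p) * (1 + k * ε ^ q) ^ (1 / q)
            = ((k : ℝ) + 1) ^ (1 / p) * (max α 0 * (1 + k * ε ^ q) ^ (1 / q)) := by ring
          _ ≤ ((k : ℝ) + 1) ^ (1 / p) * ((k : ℝ) + 1) ^ (1 - 1 / p) := by gcongr
          _ = k + 1 := hsplit
          _ ≤ _ := le_lpNorm_scaledHadamard_sub_submatrix_mul hH hε hpq J Y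

theorem column_subset_selection_lower_bound_general
    (p : ℝ) (hp : 1 < p) (r : ℕ) (k : ℕ) (hk : k = 2 ^ r - 1)
    (α : ℝ) (hα : α < ((k : ℝ) + 1) ^ (1 - 1 / p)) :
    ∃ A : Matrix (Fin (k + 1)) (Fin (k + 1)) ℝ,
      0 < sInf {c : ℝ | ∃ X : Matrix (Fin (k + 1)) (Fin (k + 1)) ℝ,
            X.rank ≤ k ∧ c = lpNorm p (A - X)} ∧
      ∀ (J : Fin k → Fin (k + 1)), Function.Injective J →
        ∀ Y : Matrix (Fin k) (Fin (k + 1)) ℝ,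
          α * sInf {c : ℝ | ∃ X : Matrix (Fin (k + 1)) (Fin (k + 1)) ℝ,
              X.rank ≤ k ∧ c = lpNorm p (A - X)} ≤
            lpNorm p (A - A.submatrix id J * Y) := by
  have hcard : k + 1 = 2 ^ r := by
    have := Nat.one_le_two_pow (n := r)
    omega
  obtain ⟨H, hH⟩ := exists_isHadamard_of_eq_two_pow hcard
  obtain ⟨A, hpos, hA⟩ := hH.exists_column_subset_selection_lower_bound hp hα
  exact ⟨A, hpos, fun J _ Y => hA J Y⟩

theorem column_subset_selection_lower_bound
    (p : ℝ) (hp : 1 < p) (r : ℕ) (hr : 0 < r) (k : ℕ) (hk : k = 2 ^ r - 1)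
    (α : ℝ) (hα : α < ((k : ℝ) + 1) ^ (1 - 1 / p)) :
    ∃ A : Matrix (Fin (k + 1)) (Fin (k + 1)) ℝ,
      0 < sInf {c : ℝ | ∃ X : Matrix (Fin (k + 1)) (Fin (k + 1)) ℝ,
            X.rank ≤ k ∧ c = lpNorm p (A - X)} ∧
      ∀ (J : Fin k → Fin (k + 1)), Function.Injective J →
        ∀ Y : Matrix (Fin k) (Fin (k + 1)) ℝ,
          α * sInf {c : ℝ | ∃ X : Matrix (Fin (k + 1)) (Fin (k + 1)) ℝ,
              X.rank ≤ k ∧ c = lpNorm p (A - X)} ≤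
            lpNorm p (A - A.submatrix id J * Y) :=
  column_subset_selection_lower_bound_general p hp r k hk α hα
end

section
/- Let 1 ≤ p < ∞, let A ∈ ℝ^{n×m}, U ∈ ℝ^{n×k}, V ∈ ℝ^{k×m}, and set Δ = A − UV. Let J = (j_1, …, j_k) ∈ {1, …, m}^k be a tuple of column indices such that the k×k matrix V_J is invertible. Then inf_{Y ∈ ℝ^{k×m}} ‖A − A_J Y‖_p^p ≤ ‖Δ − Δ_J V_J^{−1} V‖_p^p. -/
theorem err_of_column_subset_le
    (n m k : ℕ) (p : ℝ) (hp : 1 ≤ p)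
    (A : Matrix (Fin n) (Fin m) ℝ) (U : Matrix (Fin n) (Fin k) ℝ)
    (V : Matrix (Fin k) (Fin m) ℝ)
    (Δ : Matrix (Fin n) (Fin m) ℝ) (hΔ : Δ = A - U * V)
    (J : Fin k → Fin m) (hJ : IsUnit (V.submatrix id J)) :
    sInf {c : ℝ | ∃ Y : Matrix (Fin k) (Fin m) ℝ,
        c = lpNorm p (A - A.submatrix id J * Y) ^ p} ≤
      lpNorm p (Δ - Δ.submatrix id J * (V.submatrix id J)⁻¹ * V) ^ p := by
  set Y := (V.submatrix id J)⁻¹ * V with hY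
  have hinv : V.submatrix id J * (V.submatrix id J)⁻¹ = 1 :=
    Matrix.mul_nonsing_inv _ ((Matrix.isUnit_iff_isUnit_det _).mp hJ)
  have hmulsub : (U * V).submatrix id J = U * V.submatrix id J := by
    ext i j; simp [Matrix.mul_apply]
  have key : A - A.submatrix id J * Y = Δ - Δ.submatrix id J * Y := by
    subst hΔ
    have h2 : V.submatrix id J * Y = V := by
      rw [hY, ← Matrix.mul_assoc, hinv, Matrix.one_mul]
    have hsub : (A - U * V).submatrix id J = A.submatrix id J - U * V.submatrix id J := by
      rw [← hmulsub]
      ext i j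
      simp [Matrix.sub_apply]
    rw [hsub, Matrix.sub_mul, Matrix.mul_assoc, h2]
    abel
  have hassoc : Δ.submatrix id J * (V.submatrix id J)⁻¹ * V = Δ.submatrix id J * Y := by
    rw [hY, Matrix.mul_assoc]
  apply csInf_le
  · refine ⟨0, fun c hc => ?_⟩
    obtain ⟨Z, rfl⟩ := hc
    exact Real.rpow_nonneg
      (Real.rpow_nonneg (Finset.sum_nonneg fun i _ => Finset.sum_nonneg fun j _ =>
        Real.rpow_nonneg (abs_nonneg _) _) _) _
  · exact ⟨Y, by rw [key, hassoc]⟩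
end

section
/- Let k, m be positive integers and let 2 ≤ p < ∞. Let S ∈ ℂ^{k×m} be a matrix, r = (r_1, …, r_m) ∈ ℂ^m a vector, and let T ∈ ℂ^{(k+1)×m} be the matrix whose first row is r and whose remaining k rows form S. Then Σ_{I ∈ {1,…,m}^{k+1}} |det(T_I)|^p ≤ (k+1)^{p−1} · (Σ_{l=1}^m |r_l|^p) · (Σ_{J ∈ {1,…,m}^k} |det(S_J)|^p), where the sums range over all ordered tuples of indices (with repetitions allowed). -/
/-!
Expanding along the first row, `det T_I = ∑ᵢ (-1)^i r(I i) det S_{I ∖ i}` is the coefficient of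
the exterior product `r ∧ g` of `r` with the antisymmetric function `g J = det S_J`.

For `p = 2` the bound holds with constant `k + 1` because each cross term
`∑_I aᵢ(I) conj aⱼ(I)`, `i ≠ j`, of `∑_I |∑ᵢ aᵢ(I)|²` is minus a sum of squares: substituting the
two removed entries and moving them to the front by antisymmetry costs opposite signs. For `p = ∞`
the triangle inequality gives the constant `k + 1`. The general case is complex interpolation
between the two: the three-lines theorem applied to `z ↦ ∑_I (r_z ∧ g_z)(I) φ_z(I)`, where
`r_z`, `g_z` and `φ_z` keep the phases of `r`, `g` and `conj (r ∧ g)` and raise their moduli to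
the powers `(p/2)(1 - z)`, `(p/2)(1 - z)` and `(p/2)(1 + z)`, gives at `z = 1 - 2/p`
`L ≤ ((k+1) ‖r‖ₚᵖ ‖g‖ₚᵖ L)^(1/p) ((k+1) L)^(1 - 2/p)` for `L = ∑_I |det T_I|^p`.
-/

open Finset Complex ComplexConjugate

namespace Fin

theorem sum_univ_insertNth {α M : Type*} [Fintype α] [AddCommMonoid M] {n : ℕ}
    (p : Fin (n + 1)) (φ : (Fin (n + 1) → α) → M) :
    ∑ I, φ I = ∑ x, ∑ J : Fin n → α, φ (p.insertNth x J) := by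
  rw [← (insertNthEquiv (fun _ => α) p).sum_comp, Fintype.sum_prod_type]
  rfl

theorem insertNth_insertNth_comp_succAbove {α : Type*} {n : ℕ} (i : Fin (n + 2))
    (j : Fin (n + 1)) (x y : α) (K : Fin n → α) :
    i.insertNth x (j.insertNth y K) ∘ (i.succAbove j).succAbove =
      (j.predAbove i).insertNth x K := by
  funext t
  induction t using (j.predAbove i).succAboveCases with
  | x => simp [succAbove_succAbove_predAbove]
  | p s => simp [succAbove_succAbove_succAbove_predAbove]

theorem odd_add_succAbove_add_predAbove {n : ℕ} (i : Fin (n + 2)) (j : Fin (n + 1)) :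
    Odd ((i : ℕ) + j + i.succAbove j + j.predAbove i) := by
  rw [Nat.odd_iff]
  simp only [succAbove, predAbove, lt_def, val_castSucc, apply_dite Fin.val, val_pred,
    coe_castPred, dite_eq_ite, apply_ite Fin.val, val_succ]
  split_ifs <;> omega

end Fin

namespace Complex

noncomputable def phasePow (w s : ℂ) : ℂ := w * (‖w‖ : ℂ) ^ (s - 1)

@[simp] theorem phasePow_one (w : ℂ) : phasePow w 1 = w := by simp [phasePow]

theorem norm_phasePow {w s : ℂ} (h : w ≠ 0 ∨ s.re ≠ 0) : ‖phasePow w s‖ = ‖w‖ ^ s.re := by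
  rcases eq_or_ne w 0 with rfl | hw
  · simp [phasePow, Real.zero_rpow (h.resolve_left (not_not.2 rfl))]
  · have hw' : 0 < ‖w‖ := norm_pos_iff.2 hw
    rw [phasePow, norm_mul, norm_cpow_eq_rpow_re_of_pos hw', sub_re, one_re,
      Real.rpow_sub_one hw'.ne']
    field_simp

theorem norm_phasePow_le (w : ℂ) {s : ℂ} {t : ℝ} (h0 : 0 ≤ s.re) (ht : s.re ≤ t) :
    ‖phasePow w s‖ ≤ max 1 ‖w‖ ^ t := by
  rcases eq_or_ne w 0 with rfl | hw
  · simp only [phasePow, zero_mul, norm_zero]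
    positivity
  rw [norm_phasePow (Or.inl hw)]
  calc ‖w‖ ^ s.re ≤ max 1 ‖w‖ ^ s.re := Real.rpow_le_rpow (norm_nonneg w) (le_max_right _ _) h0
    _ ≤ max 1 ‖w‖ ^ t := Real.rpow_le_rpow_of_exponent_le (le_max_left _ _) ht

theorem mul_phasePow_conj (w : ℂ) {s : ℝ} (hs : 0 < s) :
    w * phasePow (conj w) s = ((‖w‖ ^ (s + 1) : ℝ) : ℂ) := by
  rcases eq_or_ne w 0 with rfl | hw
  · simp [Real.zero_rpow (by linarith : s + 1 ≠ 0)]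
  have hw' : 0 < ‖w‖ := norm_pos_iff.2 hw
  rw [phasePow, ← mul_assoc, mul_conj', norm_conj, ← ofReal_one, ← ofReal_sub,
    ← ofReal_cpow hw'.le, Real.rpow_add_one hw'.ne', Real.rpow_sub_one hw'.ne']
  push_cast
  field_simp

theorem phasePow_mul_of_norm_eq_one {u : ℂ} (hu : ‖u‖ = 1) (w s : ℂ) :
    phasePow (u * w) s = u * phasePow w s := by
  simp only [phasePow, norm_mul, hu, one_mul, mul_assoc]

theorem _root_.Differentiable.const_phasePow (w : ℂ) {f : ℂ → ℂ} (hf : Differentiable ℂ f) :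
    Differentiable ℂ fun z => phasePow w (f z) := by
  rcases eq_or_ne w 0 with rfl | hw
  · simp [phasePow]
  · exact (differentiable_const w).mul
      ((hf.sub_const 1).const_cpow (Or.inl (by simpa using hw)))

theorem sq_norm_phasePow {p : ℝ} (hp : 0 < p) (w : ℂ) {s : ℂ} (hs : s.re = p / 2) :
    ‖phasePow w s‖ ^ 2 = ‖w‖ ^ p := by
  rw [norm_phasePow (Or.inr (by rw [hs]; positivity)), hs, ← Real.rpow_mul_natCast (norm_nonneg w)]
  norm_num

end Complex

theorem Real.le_mul_rpow_of_le_sqrt_rpow_mul_rpow {L c d p : ℝ} (hp : 0 < p) (hL : 0 ≤ L)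
    (hc : 0 ≤ c) (hd : 0 ≤ d)
    (h : L ≤ √(c * L) ^ (2 / p) * (d * L) ^ (1 - 2 / p)) :
    L ≤ c * d ^ (p - 2) := by
  rcases hL.eq_or_lt with rfl | hL
  · positivity
  have h1 : L ≤ (c * L) ^ (1 / p) * (d * L) ^ (1 - 2 / p) := by
    rwa [Real.sqrt_eq_rpow, ← Real.rpow_mul (by positivity),
      show 1 / 2 * (2 / p) = 1 / p by ring] at h
  have h2 : L ^ p ≤ c * L * (d * L) ^ (p - 2) :=
    calc L ^ p ≤ ((c * L) ^ (1 / p) * (d * L) ^ (1 - 2 / p)) ^ p :=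
          Real.rpow_le_rpow hL.le h1 hp.le
      _ = c * L * (d * L) ^ (p - 2) := by
        rw [Real.mul_rpow (by positivity) (by positivity), ← Real.rpow_mul (by positivity),
          ← Real.rpow_mul (by positivity), one_div_mul_cancel hp.ne', Real.rpow_one,
          show (1 - 2 / p) * p = p - 2 by field_simp]
  have h3 : L ^ p = L * L * L ^ (p - 2) := by
    conv_lhs => rw [show p = p - 2 + 1 + 1 by ring, Real.rpow_add_one hL.ne',
      Real.rpow_add_one hL.ne']
    ring
  rw [h3, Real.mul_rpow hd hL.le] at h2
  refine le_of_mul_le_mul_right ?_ (by positivity : 0 < L * L ^ (p - 2))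
  linarith

section

variable {α : Type*} {k : ℕ}

def IsSignAntisymm (g : (Fin k → α) → ℂ) : Prop :=
  ∀ (σ : Equiv.Perm (Fin k)) (J : Fin k → α), g (J ∘ σ) = ((Equiv.Perm.sign σ : ℤ) : ℂ) * g J

theorem IsSignAntisymm.apply_insertNth {g : (Fin (k + 1) → α) → ℂ} (hg : IsSignAntisymm g)
    (t : Fin (k + 1)) (a : α) (K : Fin k → α) :
    g (t.insertNth a K) = (-1) ^ (t : ℕ) * g (Fin.cons a K) := by
  rw [← Fin.cons_comp_cycleRange, hg, Fin.sign_cycleRange]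
  push_cast
  rfl

theorem IsSignAntisymm.phasePow {g : (Fin k → α) → ℂ} (hg : IsSignAntisymm g) (s : ℂ) :
    IsSignAntisymm fun J => phasePow (g J) s := fun σ J => by
  have hσ : ‖((Equiv.Perm.sign σ : ℤ) : ℂ)‖ = 1 := by
    rcases Int.units_eq_one_or (Equiv.Perm.sign σ) with h | h <;> simp [h]
  simp only [hg σ J, phasePow_mul_of_norm_eq_one hσ]

def wedgeTerm (r : α → ℂ) (g : (Fin k → α) → ℂ) (i : Fin (k + 1)) (I : Fin (k + 1) → α) : ℂ :=
  (-1) ^ (i : ℕ) * r (I i) * g (I ∘ i.succAbove)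

def wedge (r : α → ℂ) (g : (Fin k → α) → ℂ) (I : Fin (k + 1) → α) : ℂ :=
  ∑ i, wedgeTerm r g i I

theorem sum_norm_wedgeTerm_sq [Fintype α] (r : α → ℂ) (g : (Fin k → α) → ℂ) (i : Fin (k + 1)) :
    ∑ I, ‖wedgeTerm r g i I‖ ^ 2 = (∑ l, ‖r l‖ ^ 2) * ∑ J, ‖g J‖ ^ 2 := by
  rw [Fin.sum_univ_insertNth i, sum_mul_sum]
  simp [wedgeTerm, mul_pow]

theorem wedgeTerm_insertNth_insertNth {r : α → ℂ} {g : (Fin (k + 1) → α) → ℂ}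
    (hg : IsSignAntisymm g) (i : Fin (k + 2)) (j : Fin (k + 1)) (x y : α) (K : Fin k → α) :
    wedgeTerm r g i (i.insertNth x (j.insertNth y K)) =
      (-1) ^ ((i : ℕ) + j) * r x * g (Fin.cons y K) := by
  simp only [wedgeTerm, Fin.insertNth_apply_same, Fin.insertNth_comp_succAbove,
    hg.apply_insertNth, pow_add]
  ring

theorem wedgeTerm_succAbove_insertNth_insertNth {r : α → ℂ} {g : (Fin (k + 1) → α) → ℂ}
    (hg : IsSignAntisymm g) (i : Fin (k + 2)) (j : Fin (k + 1)) (x y : α) (K : Fin k → α) :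
    wedgeTerm r g (i.succAbove j) (i.insertNth x (j.insertNth y K)) =
      (-1) ^ ((i.succAbove j : ℕ) + j.predAbove i) * r y * g (Fin.cons x K) := by
  simp only [wedgeTerm, Fin.insertNth_apply_succAbove, Fin.insertNth_apply_same,
    Fin.insertNth_insertNth_comp_succAbove, hg.apply_insertNth, pow_add]
  ring

theorem sum_wedgeTerm_mul_conj_succAbove [Fintype α] {r : α → ℂ} {g : (Fin (k + 1) → α) → ℂ}
    (hg : IsSignAntisymm g) (i : Fin (k + 2)) (j : Fin (k + 1)) :
    ∑ I, wedgeTerm r g i I * conj (wedgeTerm r g (i.succAbove j) I) =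
      -((∑ K : Fin k → α, ‖∑ x, r x * conj (g (Fin.cons x K))‖ ^ 2 : ℝ) : ℂ) := by
  have hsign : ((-1 : ℂ) ^ ((i : ℕ) + j)) * (-1) ^ ((i.succAbove j : ℕ) + j.predAbove i) = -1 := by
    rw [← pow_add, ← add_assoc]
    exact (Fin.odd_add_succAbove_add_predAbove i j).neg_one_pow
  simp_rw [Fin.sum_univ_insertNth i, Fin.sum_univ_insertNth j,
    wedgeTerm_insertNth_insertNth hg, wedgeTerm_succAbove_insertNth_insertNth hg]
  push_cast
  simp_rw [← mul_conj', map_sum, sum_mul_sum, ← sum_neg_distrib]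
  conv_rhs => rw [sum_comm]; enter [2, x]; rw [sum_comm]
  refine sum_congr rfl fun x _ => sum_congr rfl fun y _ => sum_congr rfl fun K _ => ?_
  simp only [map_mul, map_pow, map_neg, map_one, conj_conj]
  linear_combination r x * g (Fin.cons y K) * conj (r y) * conj (g (Fin.cons x K)) * hsign

theorem re_sum_wedgeTerm_mul_conj_nonpos [Fintype α] {r : α → ℂ} {g : (Fin k → α) → ℂ}
    (hg : IsSignAntisymm g) {i j : Fin (k + 1)} (hij : i ≠ j) :
    (∑ I, wedgeTerm r g i I * conj (wedgeTerm r g j I)).re ≤ 0 := by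
  cases k with
  | zero => exact (hij (Subsingleton.elim (α := Fin 1) i j)).elim
  | succ n =>
    obtain ⟨j, rfl⟩ := Fin.exists_succAbove_eq hij.symm
    rw [sum_wedgeTerm_mul_conj_succAbove hg, neg_re, ofReal_re, neg_nonpos]
    positivity

theorem sum_norm_wedge_sq_le [Fintype α] (r : α → ℂ) {g : (Fin k → α) → ℂ}
    (hg : IsSignAntisymm g) :
    ∑ I, ‖wedge r g I‖ ^ 2 ≤ (k + 1) * ((∑ l, ‖r l‖ ^ 2) * ∑ J, ‖g J‖ ^ 2) := by
  have hsq (w : ℂ) : ‖w‖ ^ 2 = (w * conj w).re := by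
    rw [mul_conj']; norm_cast
  set c : Fin (k + 1) → Fin (k + 1) → ℝ :=
    fun i j => (∑ I, wedgeTerm r g i I * conj (wedgeTerm r g j I)).re
  have hexpand : ∑ I, ‖wedge r g I‖ ^ 2 = ∑ i, ∑ j, c i j := by
    simp_rw [c, hsq, wedge, map_sum, sum_mul_sum, re_sum]
    rw [sum_comm]
    exact sum_congr rfl fun i _ => sum_comm
  have hdiag (i : Fin (k + 1)) : c i i = (∑ l, ‖r l‖ ^ 2) * ∑ J, ‖g J‖ ^ 2 := by
    simp_rw [c, re_sum, ← hsq, sum_norm_wedgeTerm_sq]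
  have hrow (i : Fin (k + 1)) : ∑ j, c i j ≤ c i i := by
    rw [← add_sum_erase _ _ (mem_univ i)]
    exact add_le_of_nonpos_right <| sum_nonpos fun j hj =>
      re_sum_wedgeTerm_mul_conj_nonpos hg (ne_of_mem_erase hj).symm
  calc ∑ I, ‖wedge r g I‖ ^ 2 = ∑ i, ∑ j, c i j := hexpand
    _ ≤ ∑ i, c i i := sum_le_sum fun i _ => hrow i
    _ = (k + 1) * ((∑ l, ‖r l‖ ^ 2) * ∑ J, ‖g J‖ ^ 2) := by
      simp [hdiag]

theorem norm_wedge_le (r : α → ℂ) (g : (Fin k → α) → ℂ) {a b : ℝ} (hr : ∀ l, ‖r l‖ ≤ a)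
    (hg : ∀ J, ‖g J‖ ≤ b) (I : Fin (k + 1) → α) : ‖wedge r g I‖ ≤ (k + 1) * (a * b) := by
  have ha : 0 ≤ a := (norm_nonneg _).trans (hr (I 0))
  calc ‖wedge r g I‖ ≤ ∑ i, ‖wedgeTerm r g i I‖ := norm_sum_le _ _
    _ ≤ ∑ _i : Fin (k + 1), a * b := sum_le_sum fun i _ => by
      simp only [wedgeTerm, norm_mul, norm_pow, norm_neg, norm_one, one_pow, one_mul]
      exact mul_le_mul (hr _) (hg _) (norm_nonneg _) ha
    _ = (k + 1) * (a * b) := by simp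

section Interpolation

variable [Fintype α]

noncomputable def wedgeInterpolant (p : ℝ) (r : α → ℂ) (g : (Fin k → α) → ℂ) (z : ℂ) : ℂ :=
  ∑ I, wedge (fun l => phasePow (r l) ((p / 2 : ℝ) * (1 - z)))
      (fun J => phasePow (g J) ((p / 2 : ℝ) * (1 - z))) I *
    phasePow (conj (wedge r g I)) ((p / 2 : ℝ) * (1 + z))

theorem differentiable_wedgeInterpolant (p : ℝ) (r : α → ℂ) (g : (Fin k → α) → ℂ) :
    Differentiable ℂ (wedgeInterpolant p r g) := by
  have hs : Differentiable ℂ fun z : ℂ => ((p / 2 : ℝ) : ℂ) * (1 - z) := by fun_prop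
  have ht : Differentiable ℂ fun z : ℂ => ((p / 2 : ℝ) : ℂ) * (1 + z) := by fun_prop
  refine Differentiable.fun_sum fun I _ => Differentiable.mul ?_ (ht.const_phasePow _)
  refine Differentiable.fun_sum fun i _ => ?_
  exact ((differentiable_const _).mul (hs.const_phasePow _)).mul (hs.const_phasePow _)

theorem wedgeInterpolant_one_sub_two_div {p : ℝ} (hp : 1 < p) (r : α → ℂ)
    (g : (Fin k → α) → ℂ) :
    wedgeInterpolant p r g (1 - 2 / p : ℝ) = (∑ I, ‖wedge r g I‖ ^ p : ℝ) := by
  have hp0 : p ≠ 0 := by positivity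
  have hs : ((p / 2 : ℝ) : ℂ) * (1 - (1 - 2 / p : ℝ)) = 1 := by
    exact_mod_cast (by field_simp; ring : p / 2 * (1 - (1 - 2 / p)) = 1)
  have ht : ((p / 2 : ℝ) : ℂ) * (1 + (1 - 2 / p : ℝ)) = (p - 1 : ℝ) := by
    exact_mod_cast (by field_simp; ring : p / 2 * (1 + (1 - 2 / p)) = p - 1)
  simp only [wedgeInterpolant, hs, ht, phasePow_one, mul_phasePow_conj _ (sub_pos.2 hp),
    sub_add_cancel, ofReal_sum]

theorem norm_wedgeInterpolant_le (p : ℝ) (r : α → ℂ) (g : (Fin k → α) → ℂ) (z : ℂ) :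
    ‖wedgeInterpolant p r g z‖ ≤
      ∑ I, ‖wedge (fun l => phasePow (r l) ((p / 2 : ℝ) * (1 - z)))
          (fun J => phasePow (g J) ((p / 2 : ℝ) * (1 - z))) I‖ *
        ‖phasePow (conj (wedge r g I)) ((p / 2 : ℝ) * (1 + z))‖ :=
  (norm_sum_le _ _).trans_eq (sum_congr rfl fun _ _ => norm_mul _ _)

theorem norm_wedgeInterpolant_le_of_re_eq_zero {p : ℝ} (hp : 0 < p) (r : α → ℂ)
    {g : (Fin k → α) → ℂ} (hg : IsSignAntisymm g) {z : ℂ} (hz : z.re = 0) :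
    ‖wedgeInterpolant p r g z‖ ≤
      √((k + 1) * ((∑ l, ‖r l‖ ^ p) * ∑ J, ‖g J‖ ^ p)) * √(∑ I, ‖wedge r g I‖ ^ p) := by
  have hs : (((p / 2 : ℝ) : ℂ) * (1 - z)).re = p / 2 := by simp [hz]
  have ht : (((p / 2 : ℝ) : ℂ) * (1 + z)).re = p / 2 := by simp [hz]
  refine (norm_wedgeInterpolant_le p r g z).trans <|
    (Real.sum_mul_le_sqrt_mul_sqrt _ _ _).trans ?_
  have hwedge : ∑ I, ‖wedge (fun l => phasePow (r l) ((p / 2 : ℝ) * (1 - z)))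
      (fun J => phasePow (g J) ((p / 2 : ℝ) * (1 - z))) I‖ ^ 2 ≤
        (k + 1) * ((∑ l, ‖r l‖ ^ p) * ∑ J, ‖g J‖ ^ p) := by
    refine (sum_norm_wedge_sq_le _ (hg.phasePow _)).trans_eq ?_
    simp only [sq_norm_phasePow hp _ hs]
  have hconj : ∑ I, ‖phasePow (conj (wedge r g I)) ((p / 2 : ℝ) * (1 + z))‖ ^ 2 =
      ∑ I, ‖wedge r g I‖ ^ p := by
    simp only [sq_norm_phasePow hp _ ht, norm_conj]
  rw [hconj]
  gcongr

theorem norm_wedgeInterpolant_le_of_re_eq_one {p : ℝ} (hp : 0 < p) (r : α → ℂ)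
    (g : (Fin k → α) → ℂ) {z : ℂ} (hz : z.re = 1) :
    ‖wedgeInterpolant p r g z‖ ≤ (k + 1) * ∑ I, ‖wedge r g I‖ ^ p := by
  have hs : (((p / 2 : ℝ) : ℂ) * (1 - z)).re = 0 := by simp [hz]
  have ht : (((p / 2 : ℝ) : ℂ) * (1 + z)).re = p := by simp [hz]; ring
  have hr (l : α) : ‖phasePow (r l) ((p / 2 : ℝ) * (1 - z))‖ ≤ 1 := by
    simpa using norm_phasePow_le (r l) hs.ge hs.le
  have hg (J : Fin k → α) : ‖phasePow (g J) ((p / 2 : ℝ) * (1 - z))‖ ≤ 1 := by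
    simpa using norm_phasePow_le (g J) hs.ge hs.le
  refine (norm_wedgeInterpolant_le p r g z).trans ?_
  rw [mul_sum]
  refine sum_le_sum fun I _ => ?_
  rw [norm_phasePow (Or.inr (by rw [ht]; exact hp.ne')), ht, norm_conj]
  gcongr
  simpa using norm_wedge_le _ _ hr hg I

theorem bddAbove_norm_wedgeInterpolant {p : ℝ} (hp : 0 ≤ p) (r : α → ℂ)
    (g : (Fin k → α) → ℂ) :
    BddAbove ((norm ∘ wedgeInterpolant p r g) '' HadamardThreeLines.verticalClosedStrip 0 1) := by
  set a := ∑ l, max 1 ‖r l‖ ^ p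
  set b := ∑ J, max 1 ‖g J‖ ^ p
  refine ⟨∑ I, (k + 1) * (a * b) * max 1 ‖wedge r g I‖ ^ p, ?_⟩
  rintro _ ⟨z, ⟨hz0, hz1⟩, rfl⟩
  have hs : (((p / 2 : ℝ) : ℂ) * (1 - z)).re = p / 2 * (1 - z.re) := by simp
  have ht : (((p / 2 : ℝ) : ℂ) * (1 + z)).re = p / 2 * (1 + z.re) := by simp
  have hs0 : 0 ≤ (((p / 2 : ℝ) : ℂ) * (1 - z)).re := by rw [hs]; nlinarith
  have hsp : (((p / 2 : ℝ) : ℂ) * (1 - z)).re ≤ p := by rw [hs]; nlinarith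
  have ht0 : 0 ≤ (((p / 2 : ℝ) : ℂ) * (1 + z)).re := by rw [ht]; nlinarith
  have htp : (((p / 2 : ℝ) : ℂ) * (1 + z)).re ≤ p := by rw [ht]; nlinarith
  have hr (l : α) : ‖phasePow (r l) ((p / 2 : ℝ) * (1 - z))‖ ≤ a :=
    (norm_phasePow_le _ hs0 hsp).trans
      (single_le_sum (f := fun l => max 1 ‖r l‖ ^ p) (fun _ _ => by positivity) (mem_univ l))
  have hg (J : Fin k → α) : ‖phasePow (g J) ((p / 2 : ℝ) * (1 - z))‖ ≤ b :=
    (norm_phasePow_le _ hs0 hsp).trans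
      (single_le_sum (f := fun J => max 1 ‖g J‖ ^ p) (fun _ _ => by positivity) (mem_univ J))
  refine (norm_wedgeInterpolant_le p r g z).trans (sum_le_sum fun I _ => ?_)
  refine mul_le_mul (norm_wedge_le _ _ hr hg I) ?_ (norm_nonneg _) (by positivity)
  simpa only [norm_conj] using norm_phasePow_le (conj (wedge r g I)) ht0 htp

end Interpolation

theorem sum_norm_wedge_rpow_le [Fintype α] {p : ℝ} (hp : 2 ≤ p) (r : α → ℂ)
    {g : (Fin k → α) → ℂ} (hg : IsSignAntisymm g) :
    ∑ I, ‖wedge r g I‖ ^ p ≤ ((k : ℝ) + 1) ^ (p - 1) * (∑ l, ‖r l‖ ^ p) * ∑ J, ‖g J‖ ^ p := by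
  have hp0 : 0 < p := by linarith
  have hθ : ((1 - 2 / p : ℝ) : ℂ) ∈ HadamardThreeLines.verticalClosedStrip 0 1 := by
    simp only [HadamardThreeLines.verticalClosedStrip, Set.mem_preimage, ofReal_re, Set.mem_Icc]
    constructor
    · rw [sub_nonneg, div_le_one hp0]; exact hp
    · linarith [show 0 < 2 / p by positivity]
  have h := HadamardThreeLines.norm_le_interp_of_mem_verticalClosedStrip₀₁' _ hθ
    (differentiable_wedgeInterpolant p r g).diffContOnCl
    (bddAbove_norm_wedgeInterpolant hp0.le r g)
    (fun z hz => norm_wedgeInterpolant_le_of_re_eq_zero hp0 r hg hz)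
    (fun z hz => norm_wedgeInterpolant_le_of_re_eq_one hp0 r g hz)
  rw [wedgeInterpolant_one_sub_two_div (by linarith) r g, norm_real,
    Real.norm_of_nonneg (by positivity), ofReal_re, ← Real.sqrt_mul (by positivity),
    sub_sub_cancel] at h
  calc ∑ I, ‖wedge r g I‖ ^ p
      ≤ (k + 1) * ((∑ l, ‖r l‖ ^ p) * ∑ J, ‖g J‖ ^ p) * ((k : ℝ) + 1) ^ (p - 2) :=
        Real.le_mul_rpow_of_le_sqrt_rpow_mul_rpow hp0 (by positivity) (by positivity)
          (by positivity) h
    _ = ((k : ℝ) + 1) ^ (p - 1) * (∑ l, ‖r l‖ ^ p) * ∑ J, ‖g J‖ ^ p := by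
        rw [show p - 1 = p - 2 + 1 by ring, Real.rpow_add_one (by positivity)]
        ring

theorem Matrix.isSignAntisymm_det_submatrix (S : Matrix (Fin k) α ℂ) :
    IsSignAntisymm fun J => (S.submatrix id J).det := fun σ J => by
  simpa [Matrix.submatrix_submatrix] using Matrix.det_permute' σ (S.submatrix id J)

theorem Matrix.det_submatrix_eq_wedge (T : Matrix (Fin (k + 1)) α ℂ) (I : Fin (k + 1) → α) :
    (T.submatrix id I).det =
      wedge (T 0) (fun J => ((T.submatrix Fin.succ id).submatrix id J).det) I := by
  rw [Matrix.det_succ_row_zero]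
  rfl

end

theorem determinant_interpolation_lemma_p_ge_two_general
    (k m : ℕ)
    (p : ℝ) (hp : 2 ≤ p)
    (S : Matrix (Fin k) (Fin m) ℂ) (r : Fin m → ℂ)
    (T : Matrix (Fin (k + 1)) (Fin m) ℂ)
    (hT0 : ∀ j, T 0 j = r j)
    (hTS : ∀ (i : Fin k) (j : Fin m), T i.succ j = S i j) :
    ∑ I : Fin (k + 1) → Fin m, ‖(T.submatrix id I).det‖ ^ p ≤
      ((k : ℝ) + 1) ^ (p - 1) * (∑ l, ‖r l‖ ^ p) *
        ∑ J : Fin k → Fin m, ‖(S.submatrix id J).det‖ ^ p := by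
  have hr : T 0 = r := funext hT0
  have hS : T.submatrix Fin.succ id = S := Matrix.ext hTS
  simp only [T.det_submatrix_eq_wedge, hr, hS]
  exact sum_norm_wedge_rpow_le hp r S.isSignAntisymm_det_submatrix

theorem determinant_interpolation_lemma_p_ge_two
    (k m : ℕ) (hk : 0 < k) (hm : 0 < m)
    (p : ℝ) (hp : 2 ≤ p)
    (S : Matrix (Fin k) (Fin m) ℂ) (r : Fin m → ℂ)
    (T : Matrix (Fin (k + 1)) (Fin m) ℂ)
    (hT0 : ∀ j, T 0 j = r j)
    (hTS : ∀ (i : Fin k) (j : Fin m), T i.succ j = S i j) :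
    ∑ I : Fin (k + 1) → Fin m, ‖(T.submatrix id I).det‖ ^ p ≤
      ((k : ℝ) + 1) ^ (p - 1) * (∑ l, ‖r l‖ ^ p) *
        ∑ J : Fin k → Fin m, ‖(S.submatrix id J).det‖ ^ p :=
  determinant_interpolation_lemma_p_ge_two_general k m p hp S r T hT0 hTS
end

section
/- Let n_0, n_1, n_2 be positive integers and let Λ : ℂ^{n_1} × ℂ^{n_2} → ℂ^{n_0} be a bilinear map. Let p_0, p_1 ∈ [1, ∞] and M_0, M_1 > 0 be such that ‖Λ(a,b)‖_{p_0} ≤ M_0 ‖a‖_{p_0} ‖b‖_{p_0} and ‖Λ(a,b)‖_{p_1} ≤ M_1 ‖a‖_{p_1} ‖b‖_{p_1} hold for all a ∈ ℂ^{n_1} and b ∈ ℂ^{n_2}. Then for every θ ∈ [0,1], setting 1/p_θ = (1−θ)/p_0 + θ/p_1, one has ‖Λ(a,b)‖_{p_θ} ≤ M_0^{1−θ} M_1^{θ} ‖a‖_{p_θ} ‖b‖_{p_θ} for all a ∈ ℂ^{n_1} and b ∈ ℂ^{n_2}. -/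
open scoped ENNReal

noncomputable def lpNormV {n : ℕ} (p : ℝ≥0∞) (v : Fin n → ℂ) : ℝ :=
  if p = ⊤ then ⨆ i, ‖v i‖
  else (∑ i, ‖v i‖ ^ p.toReal) ^ (1 / p.toReal)

/-!
Work with the reciprocal exponent `t = 1/p`, in which `t_θ = (1 - θ) t₀ + θ t₁` is affine.
By homogeneity it suffices to bound `‖Λ(a, b)‖_{1/t_θ}` by `M₀ ^ (1 - θ) * M₁ ^ θ` for unit
vectors `a`, `b`. Pick `c` in the unit ball of `ℓ^{1/(1 - t_θ)}` norming `Λ(a, b)`, and deform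
`a`, `b`, `c` analytically into `a_z = |a| ^ (t_z / t_θ) · sgn a`, and likewise `b_z`, and
`c_z = |c| ^ ((1 - t_z) / (1 - t_θ)) · sgn c`. Then `F z = ⟨Λ(a_z, b_z), c_z⟩` is entire and
bounded on the strip `0 ≤ re z ≤ 1`, equals `‖Λ(a, b)‖_{1/t_θ}` at `z = θ`, and on the line
`re z = j` Hölder's inequality and the hypothesis give `|F z| ≤ M_j`, because there `a_z`, `b_z`
lie in the unit ball of `ℓ^{1/t_j}` and `c_z` in that of `ℓ^{1/(1 - t_j)}`. Hadamard's three lines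
theorem concludes. When `t_θ ∈ {0, 1}` either `θ ∈ {0, 1}` or `t₀ = t₁`, and the bound is direct.
-/

namespace RieszThorin

open Finset

theorem mul_conj_div_norm (z : ℂ) : z * (starRingEnd ℂ z / ‖z‖) = ‖z‖ := by
  rcases eq_or_ne z 0 with rfl | hz
  · simp
  · have : (‖z‖ : ℂ) ≠ 0 := by exact_mod_cast norm_ne_zero_iff.2 hz
    rw [mul_div_assoc', Complex.mul_conj, Complex.normSq_eq_norm_sq]
    field_simp
    push_cast
    ring

theorem norm_conj_div_norm_le_one (z : ℂ) : ‖starRingEnd ℂ z / ‖z‖‖ ≤ 1 := by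
  rcases eq_or_ne z 0 with rfl | hz
  · simp
  · rw [norm_div, Complex.norm_conj, Complex.norm_real, Real.norm_of_nonneg (norm_nonneg _),
      div_self (norm_ne_zero_iff.2 hz)]

section RecipNorm

variable {ι : Type*} [Fintype ι]

/-- The `ℓ^{1/t}` norm, the sup norm for `t = 0`. -/
noncomputable def recipNorm (t : ℝ) (v : ι → ℂ) : ℝ :=
  if t = 0 then ⨆ i, ‖v i‖ else (∑ i, ‖v i‖ ^ t⁻¹) ^ t

theorem lpNormV_eq_recipNorm {n : ℕ} {p : ℝ≥0∞} (hp : p ≠ 0) (v : Fin n → ℂ) :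
    lpNormV p v = recipNorm p⁻¹.toReal v := by
  rcases eq_or_ne p ⊤ with rfl | hp_top
  · simp [lpNormV, recipNorm]
  · have hp_real : p.toReal ≠ 0 := ENNReal.toReal_ne_zero.2 ⟨hp, hp_top⟩
    simp [lpNormV, recipNorm, hp_top, hp_real]

theorem recipNorm_of_pos {t : ℝ} (ht : 0 < t) (v : ι → ℂ) :
    recipNorm t v = (∑ i, ‖v i‖ ^ t⁻¹) ^ t :=
  if_neg ht.ne'

theorem recipNorm_zero_left (v : ι → ℂ) : recipNorm 0 v = ⨆ i, ‖v i‖ :=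
  if_pos rfl

theorem recipNorm_one_left (v : ι → ℂ) : recipNorm 1 v = ∑ i, ‖v i‖ := by
  simp [recipNorm]

theorem norm_le_recipNorm_zero (v : ι → ℂ) (i : ι) : ‖v i‖ ≤ recipNorm 0 v := by
  rw [recipNorm_zero_left]
  exact le_ciSup (f := fun j => ‖v j‖) (Set.finite_range _).bddAbove i

theorem recipNorm_nonneg (t : ℝ) (v : ι → ℂ) : 0 ≤ recipNorm t v := by
  unfold recipNorm
  split_ifs
  · exact Real.iSup_nonneg fun i => norm_nonneg _
  · positivity

theorem sum_norm_rpow_pos {v : ι → ℂ} (hv : v ≠ 0) (s : ℝ) : 0 < ∑ i, ‖v i‖ ^ s := by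
  obtain ⟨i, hi⟩ := Function.ne_iff.1 hv
  exact (Real.rpow_pos_of_pos (norm_pos_iff.2 hi) s).trans_le
    (single_le_sum (f := fun j => ‖v j‖ ^ s) (fun j _ => by positivity) (mem_univ i))

theorem recipNorm_pos {t : ℝ} {v : ι → ℂ} (hv : v ≠ 0) : 0 < recipNorm t v := by
  rcases eq_or_ne t 0 with rfl | ht
  · obtain ⟨i, hi⟩ := Function.ne_iff.1 hv
    exact (norm_pos_iff.2 hi).trans_le (norm_le_recipNorm_zero v i)
  · rw [recipNorm, if_neg ht]
    exact Real.rpow_pos_of_pos (sum_norm_rpow_pos hv _) _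

theorem recipNorm_smul {t : ℝ} (ht : 0 < t) (c : ℂ) (v : ι → ℂ) :
    recipNorm t (c • v) = ‖c‖ * recipNorm t v := by
  simp only [recipNorm_of_pos ht, Pi.smul_apply, smul_eq_mul, norm_mul,
    Real.mul_rpow (norm_nonneg _) (norm_nonneg _), ← mul_sum]
  rw [Real.mul_rpow (by positivity) (by positivity), ← Real.rpow_mul (norm_nonneg _),
    inv_mul_cancel₀ ht.ne', Real.rpow_one]

theorem recipNorm_zero_right {t : ℝ} (ht : 0 < t) : recipNorm t (0 : ι → ℂ) = 0 := by
  simpa using recipNorm_smul ht 0 (0 : ι → ℂ)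

theorem recipNorm_inv_smul_self {t : ℝ} (ht : 0 < t) {v : ι → ℂ} (hv : v ≠ 0) :
    recipNorm t ((recipNorm t v : ℂ)⁻¹ • v) = 1 := by
  rw [recipNorm_smul ht, norm_inv, Complex.norm_real, Real.norm_of_nonneg (recipNorm_nonneg t v),
    inv_mul_cancel₀ (recipNorm_pos hv).ne']

theorem recipNorm_le_one_iff {t : ℝ} (ht : 0 < t) {v : ι → ℂ} :
    recipNorm t v ≤ 1 ↔ ∑ i, ‖v i‖ ^ t⁻¹ ≤ 1 := by
  rw [recipNorm_of_pos ht]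
  simpa only [Real.one_rpow] using
    Real.rpow_le_rpow_iff (x := ∑ i, ‖v i‖ ^ t⁻¹) (by positivity) zero_le_one ht

theorem sum_norm_mul_le_recipNorm_mul {t : ℝ} (ht₀ : 0 ≤ t) (ht₁ : t ≤ 1) (v w : ι → ℂ) :
    ∑ i, ‖v i‖ * ‖w i‖ ≤ recipNorm t v * recipNorm (1 - t) w := by
  rcases ht₀.eq_or_lt with rfl | ht₀
  · rw [sub_zero, recipNorm_one_left, mul_sum]
    exact sum_le_sum fun i _ =>
      mul_le_mul_of_nonneg_right (norm_le_recipNorm_zero v i) (norm_nonneg _)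
  rcases ht₁.eq_or_lt with rfl | ht₁
  · rw [sub_self, recipNorm_one_left, sum_mul]
    exact sum_le_sum fun i _ =>
      mul_le_mul_of_nonneg_left (norm_le_recipNorm_zero w i) (norm_nonneg _)
  have hpq := Real.HolderConjugate.inv_inv ht₀ (sub_pos.2 ht₁) (add_sub_cancel t 1)
  rw [recipNorm_of_pos ht₀, recipNorm_of_pos (sub_pos.2 ht₁)]
  simpa only [one_div, inv_inv] using Real.inner_le_Lp_mul_Lq_of_nonneg univ hpq
    (f := fun i => ‖v i‖) (g := fun i => ‖w i‖) (fun i _ => norm_nonneg _)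
    (fun i _ => norm_nonneg _)

theorem recipNorm_le_one_of_norm_eq {t t' : ℝ} (ht : 0 < t) (ht' : 0 ≤ t') {v v' : ι → ℂ}
    (hv : recipNorm t v ≤ 1)
    (h : ∀ i, ‖v' i‖ = if v i = 0 then 0 else ‖v i‖ ^ (t' / t)) :
    recipNorm t' v' ≤ 1 := by
  rcases ht'.eq_or_lt with rfl | ht'
  · rw [recipNorm_zero_left]
    refine Real.iSup_le (fun i => ?_) zero_le_one
    rw [h i]
    split_ifs <;> simp
  rw [recipNorm_le_one_iff ht']
  rw [recipNorm_le_one_iff ht] at hv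
  refine le_trans (sum_le_sum fun i _ => ?_) hv
  rw [h i]
  split_ifs with hvi
  · simp [hvi, Real.zero_rpow (inv_ne_zero ht.ne'), Real.zero_rpow (inv_ne_zero ht'.ne')]
  · rw [← Real.rpow_mul (norm_nonneg _), div_mul_eq_mul_div, mul_inv_cancel₀ ht'.ne', one_div]

theorem exists_sum_mul_eq_recipNorm {t : ℝ} (ht₀ : 0 < t) (ht₁ : t < 1) (v : ι → ℂ) :
    ∃ w : ι → ℂ, recipNorm (1 - t) w ≤ 1 ∧ ∑ i, v i * w i = recipNorm t v := by
  have ht₁' : 0 < 1 - t := sub_pos.2 ht₁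
  rcases eq_or_ne v 0 with rfl | hv
  · refine ⟨0, ?_, ?_⟩ <;> simp [recipNorm_of_pos, ht₀, ht₁', Real.zero_rpow, ht₀.ne', ht₁'.ne']
  set S := ∑ i, ‖v i‖ ^ t⁻¹ with hS_def
  have hS : 0 < S := sum_norm_rpow_pos hv _
  -- the equality case of Hölder's inequality
  set w : ι → ℂ := fun i =>
    ((‖v i‖ ^ (t⁻¹ - 1) / S ^ (1 - t) : ℝ) : ℂ) * (starRingEnd ℂ (v i) / ‖v i‖)
  refine ⟨w, ?_, ?_⟩
  · rw [recipNorm_le_one_iff ht₁']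
    calc ∑ i, ‖w i‖ ^ (1 - t)⁻¹ ≤ ∑ i, ‖v i‖ ^ t⁻¹ / S := by
          refine sum_le_sum fun i _ => ?_
          have hwi : ‖w i‖ ≤ ‖v i‖ ^ (t⁻¹ - 1) / S ^ (1 - t) := by
            rw [norm_mul, Complex.norm_real, Real.norm_of_nonneg (by positivity)]
            exact mul_le_of_le_one_right (by positivity) (norm_conj_div_norm_le_one (v i))
          refine (Real.rpow_le_rpow (norm_nonneg _) hwi (by positivity)).trans_eq ?_
          rw [Real.div_rpow (by positivity) (by positivity), ← Real.rpow_mul (norm_nonneg _),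
            ← Real.rpow_mul hS.le, mul_inv_cancel₀ ht₁'.ne', Real.rpow_one]
          congr 1
          field_simp
      _ = 1 := by rw [← sum_div, div_self hS.ne']
  · calc ∑ i, v i * w i = ∑ i, ((‖v i‖ ^ t⁻¹ / S ^ (1 - t) : ℝ) : ℂ) := by
          refine sum_congr rfl fun i _ => ?_
          rw [mul_left_comm, mul_conj_div_norm, ← Complex.ofReal_mul]
          congr 1
          rw [div_mul_eq_mul_div,
            ← Real.rpow_add_one' (norm_nonneg _) (by simpa using inv_ne_zero ht₀.ne'),
            sub_add_cancel]
      _ = recipNorm t v := by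
          rw [← Complex.ofReal_sum, ← sum_div, recipNorm_of_pos ht₀, ← hS_def]
          congr 1
          rw [div_eq_iff (by positivity), ← Real.rpow_add hS, add_sub_cancel, Real.rpow_one]

end RecipNorm

theorem rpow_mul_rpow_le_max {x y θ : ℝ} (hx : 0 ≤ x) (hy : 0 ≤ y) (hθ₀ : 0 ≤ θ) (hθ₁ : θ ≤ 1) :
    x ^ (1 - θ) * y ^ θ ≤ max x y := by
  have h₁ : 0 ≤ 1 - θ := sub_nonneg.2 hθ₁
  calc x ^ (1 - θ) * y ^ θ ≤ max x y ^ (1 - θ) * max x y ^ θ := by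
        gcongr
        exacts [le_max_left x y, le_max_right x y]
    _ = max x y := by
        rw [← Real.rpow_add' (hx.trans (le_max_left x y)) (by simp), sub_add_cancel, Real.rpow_one]

theorem min_le_rpow_mul_rpow {x y θ : ℝ} (hx : 0 ≤ x) (hy : 0 ≤ y) (hθ₀ : 0 ≤ θ) (hθ₁ : θ ≤ 1) :
    min x y ≤ x ^ (1 - θ) * y ^ θ := by
  have h₁ : 0 ≤ 1 - θ := sub_nonneg.2 hθ₁
  have hm : 0 ≤ min x y := le_min hx hy
  calc min x y = min x y ^ (1 - θ) * min x y ^ θ := by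
        rw [← Real.rpow_add' hm (by simp), sub_add_cancel, Real.rpow_one]
    _ ≤ x ^ (1 - θ) * y ^ θ := by
        gcongr
        exacts [min_le_left x y, min_le_right x y]

section PowFamily

variable {ι : Type*}

/-- `z ↦ |a| ^ ((1 - z) e₀ + z e₁) · sgn a`; since `0 / 0 = 0`, the phase `a j / ‖a j‖` makes
every coordinate vanish where `a j = 0`. -/
noncomputable def powFamily (e₀ e₁ : ℝ) (a : ι → ℂ) (z : ℂ) : ι → ℂ :=
  fun j => (‖a j‖ : ℂ) ^ ((1 - z) * e₀ + z * e₁) * (a j / ‖a j‖)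

theorem norm_powFamily_apply (e₀ e₁ : ℝ) (a : ι → ℂ) (z : ℂ) (j : ι) :
    ‖powFamily e₀ e₁ a z j‖ = if a j = 0 then 0 else ‖a j‖ ^ ((1 - z.re) * e₀ + z.re * e₁) := by
  split_ifs with h
  · simp [powFamily, h]
  · have h₀ : 0 < ‖a j‖ := norm_pos_iff.2 h
    rw [powFamily, norm_mul, Complex.norm_cpow_eq_rpow_re_of_pos h₀, norm_div, Complex.norm_real,
      Real.norm_of_nonneg h₀.le, div_self h₀.ne', mul_one]
    simp

theorem powFamily_ofReal {e₀ e₁ θ : ℝ} (hθ : (1 - θ) * e₀ + θ * e₁ = 1) (a : ι → ℂ) :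
    powFamily e₀ e₁ a θ = a := by
  have hθ' : (1 - (θ : ℂ)) * e₀ + θ * e₁ = 1 := by exact_mod_cast hθ
  funext j
  rw [powFamily, hθ', Complex.cpow_one]
  rcases eq_or_ne (a j) 0 with h | h
  · simp [h]
  · exact mul_div_cancel₀ _ (by exact_mod_cast norm_ne_zero_iff.2 h)

@[fun_prop]
theorem differentiable_powFamily (e₀ e₁ : ℝ) (a : ι → ℂ) :
    Differentiable ℂ (powFamily e₀ e₁ a) := by
  refine differentiable_pi.2 fun j => ?_
  rcases eq_or_ne (a j) 0 with h | h
  · simp only [powFamily, h, zero_div, mul_zero]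
    exact differentiable_const 0
  · have : (‖a j‖ : ℂ) ≠ 0 := by exact_mod_cast norm_ne_zero_iff.2 h
    unfold powFamily
    fun_prop (disch := exact Or.inl this)

theorem norm_powFamily_apply_le (e₀ e₁ : ℝ) (a : ι → ℂ) {z : ℂ} (hz₀ : 0 ≤ z.re) (hz₁ : z.re ≤ 1)
    (j : ι) : ‖powFamily e₀ e₁ a z j‖ ≤ max (‖a j‖ ^ e₀) (‖a j‖ ^ e₁) := by
  rw [norm_powFamily_apply]
  split_ifs with h
  · exact le_max_of_le_left (by positivity)
  · rw [Real.rpow_add (norm_pos_iff.2 h), mul_comm _ e₀, mul_comm _ e₁,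
      Real.rpow_mul (norm_nonneg _), Real.rpow_mul (norm_nonneg _)]
    exact rpow_mul_rpow_le_max (by positivity) (by positivity) hz₀ hz₁

open Complex.HadamardThreeLines in
theorem exists_norm_powFamily_le [Fintype ι] (e₀ e₁ : ℝ) (a : ι → ℂ) :
    ∃ C ≥ 0, ∀ z ∈ verticalClosedStrip 0 1, ‖powFamily e₀ e₁ a z‖ ≤ C := by
  have hC : ∀ j, 0 ≤ max (‖a j‖ ^ e₀) (‖a j‖ ^ e₁) := fun j => le_max_of_le_left (by positivity)
  refine ⟨∑ j, max (‖a j‖ ^ e₀) (‖a j‖ ^ e₁), sum_nonneg fun j _ => hC j, fun z hz => ?_⟩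
  refine (pi_norm_le_iff_of_nonneg (sum_nonneg fun j _ => hC j)).2 fun j => ?_
  exact (norm_powFamily_apply_le e₀ e₁ a hz.1 hz.2 j).trans
    (single_le_sum (f := fun j => max (‖a j‖ ^ e₀) (‖a j‖ ^ e₁)) (fun j _ => hC j) (mem_univ j))

theorem recipNorm_powFamily_le_one [Fintype ι] {t s e₀ e₁ : ℝ} (ht : 0 < t) (hs : 0 ≤ s)
    {a : ι → ℂ} (ha : recipNorm t a ≤ 1) {z : ℂ} (hz : (1 - z.re) * e₀ + z.re * e₁ = s / t) :
    recipNorm s (powFamily e₀ e₁ a z) ≤ 1 :=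
  recipNorm_le_one_of_norm_eq ht hs ha fun j => by rw [norm_powFamily_apply, hz]

end PowFamily

section Bilinear

variable {ι₀ ι₁ ι₂ : Type*} [Fintype ι₀] [Fintype ι₁] [Fintype ι₂]

theorem norm_sum_apply_mul_le {E F : Type*} [NormedAddCommGroup E] [NormedSpace ℂ E]
    [NormedAddCommGroup F] [NormedSpace ℂ F] (B : E →L[ℂ] F →L[ℂ] (ι₀ → ℂ)) (x : E) (y : F)
    (w : ι₀ → ℂ) : ‖∑ i, B x y i * w i‖ ≤ Fintype.card ι₀ * (‖B‖ * ‖x‖ * ‖y‖ * ‖w‖) := by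
  refine (norm_sum_le _ _).trans ?_
  rw [← nsmul_eq_mul, ← card_univ, ← sum_const]
  refine sum_le_sum fun i _ => ?_
  rw [norm_mul]
  gcongr
  · exact (norm_le_pi_norm _ i).trans (B.le_opNorm₂ x y)
  · exact norm_le_pi_norm w i

theorem norm_sum_apply_mul_le_of_recipNorm_le_one (B : (ι₁ → ℂ) → (ι₂ → ℂ) → (ι₀ → ℂ))
    {s M : ℝ} (hs : s ∈ Set.Icc 0 1) (hM : 0 ≤ M)
    (hB : ∀ a b, recipNorm s (B a b) ≤ M * recipNorm s a * recipNorm s b)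
    {x : ι₁ → ℂ} {y : ι₂ → ℂ} {w : ι₀ → ℂ} (hx : recipNorm s x ≤ 1) (hy : recipNorm s y ≤ 1)
    (hw : recipNorm (1 - s) w ≤ 1) : ‖∑ i, B x y i * w i‖ ≤ M :=
  calc ‖∑ i, B x y i * w i‖ ≤ ∑ i, ‖B x y i‖ * ‖w i‖ := by
        simpa only [norm_mul] using norm_sum_le univ fun i => B x y i * w i
    _ ≤ recipNorm s (B x y) * recipNorm (1 - s) w := sum_norm_mul_le_recipNorm_mul hs.1 hs.2 _ _
    _ ≤ M * recipNorm s x * recipNorm s y * recipNorm (1 - s) w := by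
        gcongr
        exacts [recipNorm_nonneg _ _, hB x y]
    _ ≤ M * 1 * 1 * 1 := by
        gcongr <;> first | assumption | exact recipNorm_nonneg _ _
    _ = M := by ring

open Complex.HadamardThreeLines in
theorem bddAbove_norm_sum_apply_mul_powFamily
    (B : (ι₁ → ℂ) →L[ℂ] (ι₂ → ℂ) →L[ℂ] (ι₀ → ℂ)) (e₀ e₁ f₀ f₁ : ℝ) (a : ι₁ → ℂ) (b : ι₂ → ℂ)
    (w : ι₀ → ℂ) :
    BddAbove ((norm ∘ fun z => ∑ i, B (powFamily e₀ e₁ a z) (powFamily e₀ e₁ b z) i *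
      powFamily f₀ f₁ w z i) '' verticalClosedStrip 0 1) := by
  obtain ⟨Ca, hCa, ha⟩ := exists_norm_powFamily_le e₀ e₁ a
  obtain ⟨Cb, hCb, hb⟩ := exists_norm_powFamily_le e₀ e₁ b
  obtain ⟨Cw, hCw, hw⟩ := exists_norm_powFamily_le f₀ f₁ w
  refine ⟨Fintype.card ι₀ * (‖B‖ * Ca * Cb * Cw), ?_⟩
  rintro _ ⟨z, hz, rfl⟩
  refine (norm_sum_apply_mul_le B _ _ _).trans ?_
  gcongr
  exacts [ha z hz, hb z hz, hw z hz]

open Complex.HadamardThreeLines in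
theorem recipNorm_apply_le_of_recipNorm_le_one (B : (ι₁ → ℂ) →L[ℂ] (ι₂ → ℂ) →L[ℂ] (ι₀ → ℂ))
    {t₀ t₁ M₀ M₁ θ : ℝ} (ht₀ : t₀ ∈ Set.Icc 0 1) (ht₁ : t₁ ∈ Set.Icc 0 1)
    (hM₀ : 0 ≤ M₀) (hM₁ : 0 ≤ M₁)
    (hB₀ : ∀ a b, recipNorm t₀ (B a b) ≤ M₀ * recipNorm t₀ a * recipNorm t₀ b)
    (hB₁ : ∀ a b, recipNorm t₁ (B a b) ≤ M₁ * recipNorm t₁ a * recipNorm t₁ b)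
    (hθ : θ ∈ Set.Icc 0 1) (htθ₀ : 0 < (1 - θ) * t₀ + θ * t₁) (htθ₁ : (1 - θ) * t₀ + θ * t₁ < 1)
    {a : ι₁ → ℂ} {b : ι₂ → ℂ} (ha : recipNorm ((1 - θ) * t₀ + θ * t₁) a ≤ 1)
    (hb : recipNorm ((1 - θ) * t₀ + θ * t₁) b ≤ 1) :
    recipNorm ((1 - θ) * t₀ + θ * t₁) (B a b) ≤ M₀ ^ (1 - θ) * M₁ ^ θ := by
  set t := (1 - θ) * t₀ + θ * t₁ with ht
  have ht' : 0 < 1 - t := sub_pos.2 htθ₁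
  obtain ⟨w, hw, hBw⟩ := exists_sum_mul_eq_recipNorm htθ₀ htθ₁ (B a b)
  set A := powFamily (t₀ / t) (t₁ / t) a
  set A' := powFamily (t₀ / t) (t₁ / t) b
  set W := powFamily ((1 - t₀) / (1 - t)) ((1 - t₁) / (1 - t)) w
  set F : ℂ → ℂ := fun z => ∑ i, B (A z) (A' z) i * W z i
  have hFθ : F θ = recipNorm t (B a b) := by
    have hA : (1 - θ) * (t₀ / t) + θ * (t₁ / t) = 1 := by field_simp; exact ht.symm
    have hW : (1 - θ) * ((1 - t₀) / (1 - t)) + θ * ((1 - t₁) / (1 - t)) = 1 := by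
      field_simp
      ring
    simp only [F, A, A', W, powFamily_ofReal hA, powFamily_ofReal hW, hBw]
  have hedge : ∀ z : ℂ, ∀ s M, s ∈ Set.Icc 0 1 → 0 ≤ M →
      (∀ a b, recipNorm s (B a b) ≤ M * recipNorm s a * recipNorm s b) →
      (1 - z.re) * (t₀ / t) + z.re * (t₁ / t) = s / t →
      (1 - z.re) * ((1 - t₀) / (1 - t)) + z.re * ((1 - t₁) / (1 - t)) = (1 - s) / (1 - t) →
      ‖F z‖ ≤ M := fun z s M hs hM hBs hz hz' =>
    norm_sum_apply_mul_le_of_recipNorm_le_one (B · ·) hs hM hBs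
      (recipNorm_powFamily_le_one htθ₀ hs.1 ha hz) (recipNorm_powFamily_le_one htθ₀ hs.1 hb hz)
      (recipNorm_powFamily_le_one ht' (sub_nonneg.2 hs.2) hw hz')
  have hbdd : BddAbove ((norm ∘ F) '' verticalClosedStrip 0 1) :=
    bddAbove_norm_sum_apply_mul_powFamily B _ _ _ _ a b w
  have hthree := norm_le_interp_of_mem_verticalClosedStrip₀₁' F (z := θ) hθ
    (by simp only [F]; fun_prop : Differentiable ℂ F).diffContOnCl hbdd
    (fun z hz => hedge z t₀ M₀ ht₀ hM₀ hB₀ (by rw [hz]; ring) (by rw [hz]; ring))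
    (fun z hz => hedge z t₁ M₁ ht₁ hM₁ hB₁ (by rw [hz]; ring) (by rw [hz]; ring))
  rwa [hFθ, Complex.norm_real, Real.norm_of_nonneg (recipNorm_nonneg _ _), Complex.ofReal_re]
    at hthree

theorem recipNorm_apply_le_mul_of_forall_le_one (B : (ι₁ → ℂ) →L[ℂ] (ι₂ → ℂ) →L[ℂ] (ι₀ → ℂ))
    {t C : ℝ} (ht : 0 < t)
    (hB : ∀ a b, recipNorm t a ≤ 1 → recipNorm t b ≤ 1 → recipNorm t (B a b) ≤ C)
    (a : ι₁ → ℂ) (b : ι₂ → ℂ) : recipNorm t (B a b) ≤ C * recipNorm t a * recipNorm t b := by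
  rcases eq_or_ne a 0 with rfl | ha
  · simp [recipNorm_zero_right ht]
  rcases eq_or_ne b 0 with rfl | hb
  · simp [recipNorm_zero_right ht]
  set α := recipNorm t a
  set β := recipNorm t b
  have hα : 0 < α := recipNorm_pos ha
  have hβ : 0 < β := recipNorm_pos hb
  have hsplit : B a b = ((α * β : ℝ) : ℂ) • B ((α : ℂ)⁻¹ • a) ((β : ℂ)⁻¹ • b) := by
    have hα' : (α : ℂ) ≠ 0 := by exact_mod_cast hα.ne'
    have hβ' : (β : ℂ) ≠ 0 := by exact_mod_cast hβ.ne'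
    simp only [map_smul, FunLike.coe_smul, Pi.smul_apply, smul_smul]
    convert (one_smul ℂ (B a b)).symm using 2
    push_cast
    field_simp
  have hunit := hB _ _ (recipNorm_inv_smul_self ht ha).le (recipNorm_inv_smul_self ht hb).le
  rw [hsplit, recipNorm_smul ht, Complex.norm_real, Real.norm_of_nonneg (by positivity)]
  calc α * β * recipNorm t (B ((α : ℂ)⁻¹ • a) ((β : ℂ)⁻¹ • b)) ≤ α * β * C := by gcongr
    _ = C * α * β := by ring

theorem recipNorm_apply_le_interp (B : (ι₁ → ℂ) →L[ℂ] (ι₂ → ℂ) →L[ℂ] (ι₀ → ℂ))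
    {t₀ t₁ M₀ M₁ θ : ℝ} (ht₀ : t₀ ∈ Set.Icc 0 1) (ht₁ : t₁ ∈ Set.Icc 0 1)
    (hM₀ : 0 ≤ M₀) (hM₁ : 0 ≤ M₁)
    (hB₀ : ∀ a b, recipNorm t₀ (B a b) ≤ M₀ * recipNorm t₀ a * recipNorm t₀ b)
    (hB₁ : ∀ a b, recipNorm t₁ (B a b) ≤ M₁ * recipNorm t₁ a * recipNorm t₁ b)
    (hθ : θ ∈ Set.Icc 0 1) (a : ι₁ → ℂ) (b : ι₂ → ℂ) :
    recipNorm ((1 - θ) * t₀ + θ * t₁) (B a b) ≤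
      M₀ ^ (1 - θ) * M₁ ^ θ * recipNorm ((1 - θ) * t₀ + θ * t₁) a *
        recipNorm ((1 - θ) * t₀ + θ * t₁) b := by
  obtain rfl | hθ₀ := hθ.1.eq_or_lt
  · simpa using hB₀ a b
  obtain rfl | hθ₁ := hθ.2.eq_or_lt
  · simpa using hB₁ a b
  obtain rfl | hne := eq_or_ne t₀ t₁
  · rw [show (1 - θ) * t₀ + θ * t₀ = t₀ by ring]
    calc recipNorm t₀ (B a b) ≤ min M₀ M₁ * recipNorm t₀ a * recipNorm t₀ b := by
          rcases min_cases M₀ M₁ with ⟨h, _⟩ | ⟨h, _⟩ <;> rw [h]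
          exacts [hB₀ a b, hB₁ a b]
      _ ≤ M₀ ^ (1 - θ) * M₁ ^ θ * recipNorm t₀ a * recipNorm t₀ b := by
          gcongr
          exacts [recipNorm_nonneg _ _, recipNorm_nonneg _ _,
            min_le_rpow_mul_rpow hM₀ hM₁ hθ₀.le hθ₁.le]
  have htθ₀ : 0 < (1 - θ) * t₀ + θ * t₁ := by
    rcases hne.lt_or_gt with h | h <;> nlinarith [ht₀.1, ht₁.1]
  have htθ₁ : (1 - θ) * t₀ + θ * t₁ < 1 := by
    rcases hne.lt_or_gt with h | h <;> nlinarith [ht₀.2, ht₁.2]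
  exact recipNorm_apply_le_mul_of_forall_le_one B htθ₀ (fun a b ha hb =>
    recipNorm_apply_le_of_recipNorm_le_one B ht₀ ht₁ hM₀ hM₁ hB₀ hB₁ hθ htθ₀ htθ₁ ha hb) a b

end Bilinear

theorem toReal_inv_mem_Icc {p : ℝ≥0∞} (hp : 1 ≤ p) : p⁻¹.toReal ∈ Set.Icc 0 1 :=
  ⟨ENNReal.toReal_nonneg,
    ENNReal.toReal_le_of_le_ofReal zero_le_one (by simpa using ENNReal.inv_le_one.2 hp)⟩

theorem ne_zero_of_one_div_eq {p p₀ p₁ : ℝ≥0∞} {θ : ℝ} (hp₀ : p₀ ≠ 0) (hp₁ : p₁ ≠ 0)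
    (h : 1 / p = ENNReal.ofReal (1 - θ) / p₀ + ENNReal.ofReal θ / p₁) : p ≠ 0 := by
  rintro rfl
  rw [one_div, ENNReal.inv_zero] at h
  exact ENNReal.add_ne_top.2 ⟨ENNReal.div_ne_top ENNReal.ofReal_ne_top hp₀,
    ENNReal.div_ne_top ENNReal.ofReal_ne_top hp₁⟩ h.symm

theorem toReal_inv_eq_of_one_div_eq {p p₀ p₁ : ℝ≥0∞} {θ : ℝ} (hp₀ : p₀ ≠ 0) (hp₁ : p₁ ≠ 0)
    (hθ : θ ∈ Set.Icc 0 1) (h : 1 / p = ENNReal.ofReal (1 - θ) / p₀ + ENNReal.ofReal θ / p₁) :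
    p⁻¹.toReal = (1 - θ) * p₀⁻¹.toReal + θ * p₁⁻¹.toReal := by
  rw [← one_div, h, ENNReal.toReal_add (ENNReal.div_ne_top ENNReal.ofReal_ne_top hp₀)
      (ENNReal.div_ne_top ENNReal.ofReal_ne_top hp₁),
    div_eq_mul_inv, div_eq_mul_inv, ENNReal.toReal_mul, ENNReal.toReal_mul,
    ENNReal.toReal_ofReal (sub_nonneg.2 hθ.2), ENNReal.toReal_ofReal hθ.1]

end RieszThorin

open RieszThorin in
theorem riesz_thorin_bilinear_general
    (n₀ n₁ n₂ : ℕ)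
    (Λ : (Fin n₁ → ℂ) → (Fin n₂ → ℂ) → (Fin n₀ → ℂ))
    (hadd₁ : ∀ a a' b, Λ (a + a') b = Λ a b + Λ a' b)
    (hsmul₁ : ∀ (c : ℂ) a b, Λ (c • a) b = c • Λ a b)
    (hadd₂ : ∀ a b b', Λ a (b + b') = Λ a b + Λ a b')
    (hsmul₂ : ∀ (c : ℂ) a b, Λ a (c • b) = c • Λ a b)
    (p₀ p₁ : ℝ≥0∞) (hp₀ : 1 ≤ p₀) (hp₁ : 1 ≤ p₁)
    (M₀ M₁ : ℝ) (hM₀ : 0 < M₀) (hM₁ : 0 < M₁)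
    (h0 : ∀ a b, lpNormV p₀ (Λ a b) ≤ M₀ * lpNormV p₀ a * lpNormV p₀ b)
    (h1 : ∀ a b, lpNormV p₁ (Λ a b) ≤ M₁ * lpNormV p₁ a * lpNormV p₁ b)
    (θ : ℝ) (hθ0 : 0 ≤ θ) (hθ1 : θ ≤ 1)
    (pθ : ℝ≥0∞)
    (hpθ : 1 / pθ = ENNReal.ofReal (1 - θ) / p₀ + ENNReal.ofReal θ / p₁) :
    ∀ a b, lpNormV pθ (Λ a b) ≤
      M₀ ^ (1 - θ) * M₁ ^ θ * lpNormV pθ a * lpNormV pθ b := by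
  have hp₀' : p₀ ≠ 0 := (zero_lt_one.trans_le hp₀).ne'
  have hp₁' : p₁ ≠ 0 := (zero_lt_one.trans_le hp₁).ne'
  have hθ : θ ∈ Set.Icc 0 1 := ⟨hθ0, hθ1⟩
  let B : (Fin n₁ → ℂ) →L[ℂ] (Fin n₂ → ℂ) →L[ℂ] (Fin n₀ → ℂ) :=
    LinearMap.toContinuousLinearMap
      (LinearMap.toContinuousLinearMap.toLinearMap ∘ₗ LinearMap.mk₂ ℂ Λ hadd₁ hsmul₁ hadd₂ hsmul₂)
  simp only [lpNormV_eq_recipNorm hp₀', lpNormV_eq_recipNorm hp₁',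
    lpNormV_eq_recipNorm (ne_zero_of_one_div_eq hp₀' hp₁' hpθ),
    toReal_inv_eq_of_one_div_eq hp₀' hp₁' hθ hpθ] at h0 h1 ⊢
  exact recipNorm_apply_le_interp B (toReal_inv_mem_Icc hp₀) (toReal_inv_mem_Icc hp₁)
    hM₀.le hM₁.le h0 h1 hθ

theorem riesz_thorin_bilinear
    (n₀ n₁ n₂ : ℕ) (h₀ : 0 < n₀) (h₁ : 0 < n₁) (h₂ : 0 < n₂)
    (Λ : (Fin n₁ → ℂ) → (Fin n₂ → ℂ) → (Fin n₀ → ℂ))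
    (hadd₁ : ∀ a a' b, Λ (a + a') b = Λ a b + Λ a' b)
    (hsmul₁ : ∀ (c : ℂ) a b, Λ (c • a) b = c • Λ a b)
    (hadd₂ : ∀ a b b', Λ a (b + b') = Λ a b + Λ a b')
    (hsmul₂ : ∀ (c : ℂ) a b, Λ a (c • b) = c • Λ a b)
    (p₀ p₁ : ℝ≥0∞) (hp₀ : 1 ≤ p₀) (hp₁ : 1 ≤ p₁)
    (M₀ M₁ : ℝ) (hM₀ : 0 < M₀) (hM₁ : 0 < M₁)
    (h0 : ∀ a b, lpNormV p₀ (Λ a b) ≤ M₀ * lpNormV p₀ a * lpNormV p₀ b)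
    (h1 : ∀ a b, lpNormV p₁ (Λ a b) ≤ M₁ * lpNormV p₁ a * lpNormV p₁ b)
    (θ : ℝ) (hθ0 : 0 ≤ θ) (hθ1 : θ ≤ 1)
    (pθ : ℝ≥0∞)
    (hpθ : 1 / pθ = ENNReal.ofReal (1 - θ) / p₀ + ENNReal.ofReal θ / p₁) :
    ∀ a b, lpNormV pθ (Λ a b) ≤
      M₀ ^ (1 - θ) * M₁ ^ θ * lpNormV pθ a * lpNormV pθ b :=
  riesz_thorin_bilinear_general n₀ n₁ n₂ Λ hadd₁ hsmul₁ hadd₂ hsmul₂ p₀ p₁ hp₀ hp₁ M₀ M₁ hM₀ hM₁ h0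
    h1 θ hθ0 hθ1 pθ hpθ
end

section
/- Let k, m be positive integers with k + 1 ≤ m. Let a ∈ ℂ^m and let b : {1,…,m}^k → ℂ be alternating, i.e., b(J∘σ) = sgn(σ)·b(J) for every tuple J ∈ {1,…,m}^k and every permutation σ of {1,…,k}. For each strictly increasing tuple I = (i_1 < ⋯ < i_{k+1}) of indices in {1,…,m}, define Λ(a,b)_I = Σ_{t=1}^{k+1} (−1)^{t+1} a_{i_t} b(I_{−t}), where I_{−t} denotes I with its t-th entry removed. Then Σ_{I strictly increasing (k+1)-tuples} |Λ(a,b)_I| ≤ (Σ_{t=1}^m |a_t|) · (Σ_{J strictly increasing k-tuples} |b(J)|). -/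
/-!
The triangle inequality bounds `‖Λ(a,b)_I‖` by `∑_t ‖a (I t)‖ ‖b (I ∘ t.succAbove)‖`. On strictly
increasing `I` the map `(I, t) ↦ (I t, I ∘ t.succAbove)` is injective, since `I` is recovered from
its range `insert (I t) (range (I ∘ t.succAbove))` and then `t` from `I t`; its image consists of
pairs `(i, J)` with `J` strictly increasing. Summing over this image therefore gives at most the
full sum `∑_{i, J} ‖a i‖ ‖b J‖`.
-/

open scoped Classical

/-- The multilinear operator Λ(a,b):
`Λ(a,b)_I = Σ_t (−1)^t a_{I(t)} b(I with t-th entry removed)` (0-indexed). -/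
noncomputable def Lam {k m : ℕ} (a : Fin m → ℂ) (b : (Fin k → Fin m) → ℂ)
    (I : Fin (k + 1) → Fin m) : ℂ :=
  ∑ t : Fin (k + 1), (-1 : ℂ) ^ (t : ℕ) * a (I t) * b (I ∘ t.succAbove)

open Finset

theorem Finset.sum_comp_le_sum_of_injOn {ι κ M : Type*} [AddCommMonoid M] [PartialOrder M]
    [IsOrderedAddMonoid M] {s : Finset ι} {t : Finset κ} {g : κ → M} (e : ι → κ)
    (he : Set.InjOn e s) (hest : Set.MapsTo e s t) (hg : ∀ j ∈ t, 0 ≤ g j) :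
    ∑ i ∈ s, g (e i) ≤ ∑ j ∈ t, g j := by
  classical
  rw [← sum_image he]
  exact sum_le_sum_of_subset_of_nonneg (image_subset_iff.2 hest) fun j hj _ => hg j hj

theorem Fin.range_eq_insert_range_comp_succAbove {α : Type*} {n : ℕ} (I : Fin (n + 1) → α)
    (t : Fin (n + 1)) : Set.range I = insert (I t) (Set.range (I ∘ t.succAbove)) := by
  rw [Set.range_comp, Fin.range_succAbove, ← Set.image_insert_eq, Set.insert_eq,
    Set.union_compl_self, Set.image_univ]

theorem Fin.injOn_apply_comp_succAbove {α : Type*} [Preorder α] {n : ℕ} :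
    Set.InjOn (fun p : (Fin (n + 1) → α) × Fin (n + 1) => (p.1 p.2, p.1 ∘ p.2.succAbove))
      {p | StrictMono p.1} := by
  rintro ⟨I, t⟩ (hI : StrictMono I) ⟨I', t'⟩ (hI' : StrictMono I') heq
  have happ : I t = I' t' := congrArg Prod.fst heq
  have hcomp : I ∘ t.succAbove = I' ∘ t'.succAbove := congrArg Prod.snd heq
  have hII' : I = I' := (StrictMono.range_inj hI hI').1 <| by
    rw [range_eq_insert_range_comp_succAbove I t, range_eq_insert_range_comp_succAbove I' t',
      happ, hcomp]
  subst hII'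
  rw [hI.injective happ]

theorem norm_Lam_le {k m : ℕ} (a : Fin m → ℂ) (b : (Fin k → Fin m) → ℂ)
    (I : Fin (k + 1) → Fin m) :
    ‖Lam a b I‖ ≤ ∑ t, ‖a (I t)‖ * ‖b (I ∘ t.succAbove)‖ := by
  refine (norm_sum_le _ _).trans_eq (sum_congr rfl fun t _ => ?_)
  simp only [norm_mul, norm_pow, norm_neg, norm_one, one_pow, one_mul]

theorem lam_l1_bound_general
    (k m : ℕ)
    (a : Fin m → ℂ) (b : (Fin k → Fin m) → ℂ) :
    ∑ I ∈ Finset.univ.filter (fun I : Fin (k + 1) → Fin m => StrictMono I),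
        ‖Lam a b I‖ ≤
      (∑ t, ‖a t‖) *
        ∑ J ∈ Finset.univ.filter (fun J : Fin k → Fin m => StrictMono J),
          ‖b J‖ := by
  set S := univ.filter (fun I : Fin (k + 1) → Fin m => StrictMono I)
  set T := univ.filter (fun J : Fin k → Fin m => StrictMono J)
  let g : Fin m × (Fin k → Fin m) → ℝ := fun q => ‖a q.1‖ * ‖b q.2‖
  calc ∑ I ∈ S, ‖Lam a b I‖
      ≤ ∑ I ∈ S, ∑ t, ‖a (I t)‖ * ‖b (I ∘ t.succAbove)‖ :=
        sum_le_sum fun I _ => norm_Lam_le a b I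
    _ = ∑ p ∈ S ×ˢ univ, g (p.1 p.2, p.1 ∘ p.2.succAbove) := by rw [sum_product]
    _ ≤ ∑ q ∈ univ ×ˢ T, g q := by
        have hmono : ∀ p ∈ S ×ˢ (univ : Finset (Fin (k + 1))), StrictMono p.1 := fun p hp =>
          (mem_filter.1 (mem_product.1 hp).1).2
        refine sum_comp_le_sum_of_injOn _ (Fin.injOn_apply_comp_succAbove.mono hmono)
          (fun p hp => ?_) fun q _ => by positivity
        simpa [T] using (hmono p hp).comp (Fin.strictMono_succAbove p.2)
    _ = (∑ t, ‖a t‖) * ∑ J ∈ T, ‖b J‖ := by rw [sum_product, sum_mul_sum]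

theorem lam_l1_bound
    (k m : ℕ) (hk : 0 < k) (hm : 0 < m) (hkm : k + 1 ≤ m)
    (a : Fin m → ℂ) (b : (Fin k → Fin m) → ℂ)
    (halt : ∀ (J : Fin k → Fin m) (σ : Equiv.Perm (Fin k)),
      b (J ∘ σ) = ((Equiv.Perm.sign σ : ℤ) : ℂ) * b J) :
    ∑ I ∈ Finset.univ.filter (fun I : Fin (k + 1) → Fin m => StrictMono I),
        ‖Lam a b I‖ ≤
      (∑ t, ‖a t‖) *
        ∑ J ∈ Finset.univ.filter (fun J : Fin k → Fin m => StrictMono J),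
          ‖b J‖ :=
  lam_l1_bound_general k m a b
end

section
/- Let k, m be positive integers with k + 1 ≤ m. Let a ∈ ℂ^m and let b : {1,…,m}^k → ℂ be alternating, i.e., b(J∘σ) = sgn(σ)·b(J) for every tuple J ∈ {1,…,m}^k and every permutation σ of {1,…,k}. For each strictly increasing tuple I = (i_1 < ⋯ < i_{k+1}) of indices in {1,…,m}, define Λ(a,b)_I = Σ_{t=1}^{k+1} (−1)^{t+1} a_{i_t} b(I_{−t}), where I_{−t} denotes I with its t-th entry removed. Then Σ_{I strictly increasing (k+1)-tuples} |Λ(a,b)_I|^2 ≤ (Σ_{t=1}^m |a_t|^2) · (Σ_{J strictly increasing k-tuples} |b(J)|^2). -/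
/-!
`Λ(a,b)` is the coordinate form of the wedge product `a ∧ b`, and the claim is
`‖a ∧ b‖² ≤ ‖a‖² ‖b‖²`. Summing over all index tuples rather than increasing ones, there is an
exact identity: with `k = n + 1`,
`∑_I |Λ_I|² = (n + 2) (‖a‖² ∑_J |b_J|² - (n + 1) ∑_K |(ι b)_K|²)`,
where `ι b` is the interior product of `b` with `ā`. It comes from expanding one factor of
`|Λ_I|²` along the definition of `Λ` and moving the distinguished index to the front, which
alternation turns into a factor `(-1)ᵗ` cancelling the one in `Λ`. Finally, `Λ(a,b)` is again
alternating, so for it and for `b` the sum over all tuples is a factorial times the sum over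
increasing tuples.
-/

open scoped Classical

open Finset Equiv ComplexConjugate

theorem Equiv.Perm.exists_comp_succAbove {n : ℕ} (σ : Perm (Fin (n + 1))) (t : Fin (n + 1)) :
    ∃ τ : Perm (Fin n), ⇑σ ∘ t.succAbove = (σ t).succAbove ∘ τ ∧
      Perm.sign τ * (-1) ^ (t : ℕ) = Perm.sign σ * (-1) ^ (σ t : ℕ) := by
  -- `ρ` fixes `0`, so it is the lift along `Fin.succ` of a permutation `τ` of `Fin n`.
  set ρ := (σ t).cycleRange * σ * t.cycleRange.symm
  obtain ⟨⟨p, τ⟩, hρ⟩ : ∃ pτ, decomposeFin.symm pτ = ρ := decomposeFin.symm.surjective ρ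
  obtain rfl : p = 0 := by
    simpa [ρ] using congrArg (· 0) hρ
  refine ⟨τ, funext fun j => ?_, ?_⟩
  · have := congrArg (· j.succ) hρ
    simp only [decomposeFin_symm_apply_succ, swap_self, refl_apply, coe_mul, Function.comp_apply,
      Fin.cycleRange_symm_succ, ρ] at this
    simpa using congrArg (σ t).cycleRange.symm this.symm
  · have hsign := congrArg Perm.sign hρ
    simp only [decomposeFin.symm_sign, ↓reduceIte, one_mul, sign_mul, Fin.sign_cycleRange,
      sign_symm, ρ] at hsign
    rw [hsign, mul_assoc, ← pow_add, ← two_mul, pow_mul, neg_one_sq, one_pow, mul_one, mul_comm]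

section Alternating

variable {R α : Type*} [CommRing R] {n : ℕ}

def IsAlternating (f : (Fin n → α) → R) : Prop :=
  ∀ (J : Fin n → α) (σ : Perm (Fin n)), f (J ∘ σ) = ((Perm.sign σ : ℤ) : R) * f J

theorem IsAlternating.map {S : Type*} [CommRing S] {f : (Fin n → α) → R}
    (hf : IsAlternating f) (φ : R →+* S) : IsAlternating (φ ∘ f) := fun J σ => by
  simp [hf J σ]

theorem IsAlternating.eq_zero_of_not_injective [IsAddTorsionFree R] {f : (Fin n → α) → R}
    (hf : IsAlternating f) {J : Fin n → α} (hJ : ¬ Function.Injective J) : f J = 0 := by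
  obtain ⟨p, q, hJpq, hpq⟩ := Function.not_injective_iff.1 hJ
  have hswap : J ∘ swap p q = J := by
    rw [Equiv.comp_swap_eq_update, hJpq, Function.update_eq_self, ← hJpq, Function.update_eq_self]
  have := hf J (swap p q)
  rw [hswap, Perm.sign_swap hpq] at this
  exact self_eq_neg.1 (by simpa using this)

theorem IsAlternating.apply_insertNth {f : (Fin (n + 1) → α) → R} (hf : IsAlternating f)
    (p : Fin (n + 1)) (x : α) (v : Fin n → α) :
    f (p.insertNth x v) = (-1) ^ (p : ℕ) * f (Fin.cons x v) := by
  rw [← Fin.cons_comp_cycleRange, hf, Fin.sign_cycleRange]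
  push_cast
  rfl

theorem IsAlternating.sum_neg_one_pow_mul_eq_sum_cons [Fintype α] {f : (Fin (n + 1) → α) → R}
    (hf : IsAlternating f) (p : Fin (n + 1)) (G : α → (Fin n → α) → R) :
    ∑ J, (-1) ^ (p : ℕ) * G (J p) (J ∘ p.succAbove) * f J =
      ∑ j, ∑ K, G j K * f (Fin.cons j K) := by
  rw [← (Fin.insertNthEquiv (fun _ => α) p).sum_comp, Fintype.sum_prod_type]
  refine sum_congr rfl fun j _ => sum_congr rfl fun K _ => ?_
  have hsq : (-1 : R) ^ (p : ℕ) * (-1) ^ (p : ℕ) = 1 := by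
    rw [← mul_pow, neg_one_mul, neg_neg, one_pow]
  change (-1) ^ (p : ℕ) * G (Fin.insertNth (α := fun _ => α) p j K p)
    (Fin.insertNth p j K ∘ p.succAbove) * f (Fin.insertNth p j K) = _
  rw [Fin.insertNth_apply_same, Fin.insertNth_comp_succAbove, hf.apply_insertNth]
  linear_combination G j K * f (Fin.cons j K) * hsq

end Alternating

open Nat in
theorem sum_eq_factorial_nsmul_sum_strictMono {α M : Type*} [Fintype α] [LinearOrder α]
    [AddCommMonoid M] {n : ℕ} (g : (Fin n → α) → M)
    (hg₀ : ∀ I, ¬ Function.Injective I → g I = 0) (hg : ∀ I (σ : Perm (Fin n)), g (I ∘ σ) = g I) :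
    ∑ I, g I = n ! • ∑ I ∈ univ.filter (fun I : Fin n → α => StrictMono I), g I := by
  calc ∑ I, g I = ∑ I ∈ univ.filter (fun I : Fin n → α => Function.Injective I), g I :=
        (sum_filter_of_ne fun I _ h => not_not.1 (mt (hg₀ I) h)).symm
    _ = ∑ Iσ ∈ univ.filter (fun I : Fin n → α => StrictMono I) ×ˢ (univ : Finset (Perm (Fin n))),
          g (Iσ.1 ∘ Iσ.2) := by
        symm
        refine sum_bij (fun Iσ _ => Iσ.1 ∘ Iσ.2) ?_ ?_ ?_ fun _ _ => rfl
        · simp only [mem_product, mem_filter, mem_univ, true_and, and_true]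
          exact fun Iσ hI => hI.injective.comp Iσ.2.injective
        · simp only [mem_product, mem_filter, mem_univ, true_and, and_true]
          rintro ⟨I, σ⟩ hI ⟨I', σ'⟩ hI' h
          have hII' : I = I' := by
            rw [← hI.range_inj hI', ← EquivLike.range_comp I σ, ← EquivLike.range_comp I' σ']
            exact congrArg Set.range h
          subst hII'
          simp only [Prod.mk.injEq, true_and]
          exact Equiv.ext fun x => hI.injective (congrFun h x)
        · simp only [mem_product, mem_filter, mem_univ, true_and, and_true]
          intro J hJ
          refine ⟨(J ∘ Tuple.sort J, (Tuple.sort J)⁻¹),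
            (Tuple.monotone_sort J).strictMono_of_injective (hJ.comp (Tuple.sort J).injective), ?_⟩
          ext x
          simp
    _ = n ! • ∑ I ∈ univ.filter (fun I : Fin n → α => StrictMono I), g I := by
        simp [sum_product, hg, smul_sum, Fintype.card_perm]

open Nat in
theorem IsAlternating.sum_norm_sq_eq_factorial_mul {R α : Type*} [NormedField R] [CharZero R]
    [Fintype α] [LinearOrder α] {n : ℕ} {f : (Fin n → α) → R} (hf : IsAlternating f) :
    ∑ I, ‖f I‖ ^ 2 = n ! * ∑ I ∈ univ.filter (fun I : Fin n → α => StrictMono I), ‖f I‖ ^ 2 := by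
  rw [sum_eq_factorial_nsmul_sum_strictMono, nsmul_eq_mul]
  · intro I hI
    simp [hf.eq_zero_of_not_injective hI]
  · intro I σ
    rcases Int.units_eq_one_or (Perm.sign σ) with h | h <;> simp [hf I σ, h]

section Lam

variable {m n : ℕ} (a : Fin m → ℂ) {b : (Fin n → Fin m) → ℂ}

theorem isAlternating_lam (hb : IsAlternating b) : IsAlternating (Lam a b) := by
  intro I σ
  rw [Lam, Lam, mul_sum]
  conv_rhs => rw [← Equiv.sum_comp σ]
  refine sum_congr rfl fun t _ => ?_
  obtain ⟨τ, hcomp, hsign⟩ := σ.exists_comp_succAbove t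
  rw [Function.comp_apply, Function.comp_assoc, hcomp, ← Function.comp_assoc, hb]
  have hsignℂ := congrArg (fun u : ℤˣ => ((u : ℤ) : ℂ)) hsign
  push_cast at hsignℂ
  linear_combination a (I (σ t)) * b (I ∘ (σ t).succAbove) * hsignℂ

variable (b : (Fin (n + 1) → Fin m) → ℂ)

theorem lam_cons (i : Fin m) (J : Fin (n + 1) → Fin m) :
    Lam a b (Fin.cons i J) =
      a i * b J -
        ∑ p : Fin (n + 1), (-1) ^ (p : ℕ) * a (J p) * b (Fin.cons i (J ∘ p.succAbove)) := by
  have hsucc (p : Fin (n + 1)) :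
      (Fin.cons i J : Fin (n + 2) → Fin m) ∘ p.succ.succAbove = Fin.cons i (J ∘ p.succAbove) := by
    ext j
    cases j using Fin.cases <;> simp [Fin.succ_succAbove_succ]
  rw [Lam, Fin.sum_univ_succ, sub_eq_add_neg, ← sum_neg_distrib]
  simp only [Fin.cons_zero, Fin.val_zero, pow_zero, one_mul, Fin.cons_succ, Fin.val_succ, hsucc,
    pow_succ]
  congr 1
  exact sum_congr rfl fun p _ => by ring

/-- The complex conjugate of the interior product `ι_ā b`. -/
def interiorProd (K : Fin n → Fin m) : ℂ :=
  ∑ i, a i * conj (b (Fin.cons i K))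

variable {b}

theorem sum_lam_mul_conj (hb : IsAlternating b) :
    ∑ I, Lam a b I * conj (Lam a b I) =
      (n + 2) * ∑ i, ∑ J, a i * b J * conj (Lam a b (Fin.cons i J)) := by
  have hΛ := (isAlternating_lam a hb).map (starRingEnd ℂ)
  calc ∑ I, Lam a b I * conj (Lam a b I)
      = ∑ t : Fin (n + 2), ∑ I, (-1) ^ (t : ℕ) * (a (I t) * b (I ∘ t.succAbove)) *
          conj (Lam a b I) := by
        rw [sum_comm]
        refine sum_congr rfl fun I _ => ?_
        nth_rewrite 1 [Lam]
        simp only [sum_mul, mul_assoc]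
    _ = ∑ _t : Fin (n + 2), ∑ i, ∑ J, a i * b J * conj (Lam a b (Fin.cons i J)) :=
        sum_congr rfl fun t _ => hΛ.sum_neg_one_pow_mul_eq_sum_cons t fun i J => a i * b J
    _ = (n + 2) * ∑ i, ∑ J, a i * b J * conj (Lam a b (Fin.cons i J)) := by
        rw [sum_const, card_univ, Fintype.card_fin, nsmul_eq_mul]
        push_cast
        ring

theorem sum_mul_conj_lam_cons (hb : IsAlternating b) :
    ∑ i, ∑ J, a i * b J * conj (Lam a b (Fin.cons i J)) =
      (∑ i, a i * conj (a i)) * ∑ J, b J * conj (b J) -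
        (n + 1) * ∑ K, interiorProd a b K * conj (interiorProd a b K) := by
  have hsecond : ∑ i, ∑ J, ∑ p : Fin (n + 1),
      a i * b J * conj ((-1) ^ (p : ℕ) * a (J p) * b (Fin.cons i (J ∘ p.succAbove))) =
        (n + 1) * ∑ K, interiorProd a b K * conj (interiorProd a b K) := by
    calc _ = ∑ i, ∑ _p : Fin (n + 1), ∑ j, ∑ K,
          a i * conj (a j) * conj (b (Fin.cons i K)) * b (Fin.cons j K) := by
          refine sum_congr rfl fun i _ => ?_
          rw [sum_comm]
          refine sum_congr rfl fun p _ => ?_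
          rw [← hb.sum_neg_one_pow_mul_eq_sum_cons p
            fun j K => a i * conj (a j) * conj (b (Fin.cons i K))]
          refine sum_congr rfl fun J _ => ?_
          simp only [map_mul, map_pow, map_neg, map_one]
          ring
      _ = (n + 1) * ∑ K, interiorProd a b K * conj (interiorProd a b K) := by
          simp only [sum_const, card_univ, Fintype.card_fin, nsmul_eq_mul, ← mul_sum]
          push_cast
          congr 1
          rw [(sum_congr rfl fun i _ => sum_comm).trans sum_comm]
          simp only [interiorProd, map_sum, map_mul, Complex.conj_conj, sum_mul_sum]
          exact sum_congr rfl fun K _ => sum_congr rfl fun i _ => sum_congr rfl fun j _ => by ring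
  rw [← hsecond, sum_mul_sum, ← sum_sub_distrib]
  refine sum_congr rfl fun i _ => ?_
  rw [← sum_sub_distrib]
  refine sum_congr rfl fun J _ => ?_
  rw [lam_cons, map_sub, map_sum, mul_sub, mul_sum, map_mul]
  ring

theorem sum_norm_sq_lam (hb : IsAlternating b) :
    ∑ I, ‖Lam a b I‖ ^ 2 = (n + 2) *
      ((∑ i, ‖a i‖ ^ 2) * ∑ J, ‖b J‖ ^ 2 - (n + 1) * ∑ K, ‖interiorProd a b K‖ ^ 2) := by
  apply Complex.ofReal_injective
  push_cast
  simp only [← Complex.mul_conj']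
  rw [sum_lam_mul_conj a hb, sum_mul_conj_lam_cons a hb]

end Lam

theorem lam_l2_bound_general
    (k m : ℕ) (hk : 0 < k)
    (a : Fin m → ℂ) (b : (Fin k → Fin m) → ℂ)
    (halt : ∀ (J : Fin k → Fin m) (σ : Equiv.Perm (Fin k)),
      b (J ∘ σ) = ((Equiv.Perm.sign σ : ℤ) : ℂ) * b J) :
    ∑ I ∈ Finset.univ.filter (fun I : Fin (k + 1) → Fin m => StrictMono I),
        ‖Lam a b I‖ ^ 2 ≤
      (∑ t, ‖a t‖ ^ 2) *
        ∑ J ∈ Finset.univ.filter (fun J : Fin k → Fin m => StrictMono J),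
          ‖b J‖ ^ 2 := by
  obtain ⟨n, rfl⟩ : ∃ n, k = n + 1 := ⟨k - 1, by omega⟩
  have hb : IsAlternating b := halt
  have hid := sum_norm_sq_lam a hb
  rw [(isAlternating_lam a hb).sum_norm_sq_eq_factorial_mul, hb.sum_norm_sq_eq_factorial_mul,
    Nat.factorial_succ (n + 1)] at hid
  push_cast at hid
  have hC : 0 ≤ ((n : ℝ) + 2) * (n + 1) * ∑ K, ‖interiorProd a b K‖ ^ 2 := by positivity
  have hpos : (0 : ℝ) < (n + 2) * (n + 1).factorial := by positivity
  refine le_of_mul_le_mul_left ?_ hpos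
  linarith

theorem lam_l2_bound
    (k m : ℕ) (hk : 0 < k) (hm : 0 < m) (hkm : k + 1 ≤ m)
    (a : Fin m → ℂ) (b : (Fin k → Fin m) → ℂ)
    (halt : ∀ (J : Fin k → Fin m) (σ : Equiv.Perm (Fin k)),
      b (J ∘ σ) = ((Equiv.Perm.sign σ : ℤ) : ℂ) * b J) :
    ∑ I ∈ Finset.univ.filter (fun I : Fin (k + 1) → Fin m => StrictMono I),
        ‖Lam a b I‖ ^ 2 ≤
      (∑ t, ‖a t‖ ^ 2) *
        ∑ J ∈ Finset.univ.filter (fun J : Fin k → Fin m => StrictMono J),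
          ‖b J‖ ^ 2 :=
  lam_l2_bound_general k m hk a b halt
end

section
/- Let k, m be positive integers with k ≥ 1, let a ∈ ℂ^m, and let b : {1,…,m}^k → ℂ be alternating, i.e., b(J∘σ) = sgn(σ)·b(J) for every tuple J ∈ {1,…,m}^k and every permutation σ of {1,…,k}. Then for every pair of indices 1 ≤ t < s ≤ k+1, Σ_{I = (i_1,…,i_{k+1}) ∈ {1,…,m}^{k+1}} (−1)^{t+s} a_{i_t} b(I_{−t}) · conj(a_{i_s}) · conj(b(I_{−s})) = − Σ_{J ∈ {1,…,m}^{k−1}} | Σ_{i=1}^m a_i · conj(b(i, J)) |^2, where I_{−t} denotes I with its t-th entry removed, (i, J) denotes the k-tuple obtained by prepending i to J, and conj denotes complex conjugation. In particular this sum is a non-positive real number. -/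
/-!
Write `s = t.succAbove j`. Deleting entry `t` of `I` and moving `I s` to the front costs the sign
`(-1) ^ j`; deleting entry `s` and moving `I t` to the front costs `(-1) ^ (j.predAbove t)`. Both
leave the same `(k - 1)`-tuple `K`, namely `I` with entries `t` and `s` deleted, and together with
`(-1) ^ (t + s)` the signs always multiply to `-1`. So the summand is
`-(g (I t) K * conj (g (I s) K))` with `g i K = a i * conj (b (i, K))`, and since
`I ↦ (I t, I s, K)` is a bijection, the sum is `-∑ K, ‖∑ i, g i K‖ ^ 2`.
-/

open Finset ComplexConjugate

def IsAlternatingFun {α R : Type*} [Ring R] {k : ℕ} (b : (Fin k → α) → R) : Prop :=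
  ∀ (J : Fin k → α) (σ : Equiv.Perm (Fin k)),
    b (J ∘ σ) = ((Equiv.Perm.sign σ : ℤ) : R) * b J

theorem IsAlternatingFun.apply_eq_neg_one_pow_mul_cons {α R : Type*} [Ring R] {n : ℕ}
    {b : (Fin (n + 1) → α) → R} (hb : IsAlternatingFun b) (c : Fin (n + 1) → α)
    (q : Fin (n + 1)) :
    b c = (-1) ^ (q : ℕ) * b (Fin.cons (c q) (q.removeNth c)) := by
  rw [Fin.cons_removeNth_eq_comp_cycleRange_symm, hb, Equiv.Perm.sign_symm, Fin.sign_cycleRange]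
  push_cast
  rw [← mul_assoc, ← pow_add, Even.neg_one_pow ⟨_, rfl⟩, one_mul]

theorem Fin.odd_val_add_succAbove_add_val_add_predAbove {n : ℕ} (t : Fin (n + 2))
    (j : Fin (n + 1)) : Odd ((t : ℕ) + t.succAbove j + j + j.predAbove t) := by
  simp only [succAbove, predAbove, lt_def, val_castSucc, apply_dite Fin.val, val_pred,
    coe_castPred, dite_eq_ite, apply_ite Fin.val, val_succ]
  rw [Nat.odd_iff]
  split_ifs <;> omega

theorem Fin.sum_pi_eq_sum_sum_insertNth {α M : Type*} [Fintype α] [AddCommMonoid M] {n : ℕ}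
    (p : Fin (n + 1)) (f : (Fin (n + 1) → α) → M) :
    ∑ I, f I = ∑ i, ∑ c : Fin n → α, f (p.insertNth i c) := by
  rw [← (Fin.insertNthEquiv (fun _ => α) p).sum_comp f, Fintype.sum_prod_type]
  rfl

theorem Fin.sum_pi_eq_sum_sum_sum_removeNth_removeNth {α M : Type*} [Fintype α]
    [AddCommMonoid M] {n : ℕ} (t : Fin (n + 2)) (j : Fin (n + 1))
    (F : α → α → (Fin n → α) → M) :
    ∑ I : Fin (n + 2) → α, F (I t) (I (t.succAbove j)) (j.removeNth (t.removeNth I)) =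
      ∑ i, ∑ i', ∑ K, F i i' K := by
  rw [Fin.sum_pi_eq_sum_sum_insertNth t]
  refine sum_congr rfl fun i _ => ?_
  rw [Fin.sum_pi_eq_sum_sum_insertNth j]
  simp

theorem RCLike.sum_sum_sum_mul_conj_eq_sum_norm_sq {𝕜 ι κ : Type*} [RCLike 𝕜] [Fintype ι]
    [Fintype κ]
    (g : ι → κ → 𝕜) :
    ∑ i, ∑ i', ∑ K, g i K * conj (g i' K) =
      ((∑ K, ‖∑ i, g i K‖ ^ 2 : ℝ) : 𝕜) := by
  have hK (K : κ) : ∑ i, ∑ i', g i K * conj (g i' K) = (‖∑ i, g i K‖ : 𝕜) ^ 2 := by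
    rw [← sum_mul_sum, ← map_sum, RCLike.mul_conj]
  push_cast
  simp_rw [← hK]
  symm
  rw [sum_comm]
  exact sum_congr rfl fun i _ => sum_comm

theorem IsAlternatingFun.cross_term_eq_neg_mul_conj {α : Type*} {n : ℕ} (a : α → ℂ)
    {b : (Fin (n + 1) → α) → ℂ} (hb : IsAlternatingFun b) (I : Fin (n + 2) → α)
    (t : Fin (n + 2)) (j : Fin (n + 1)) :
    (-1 : ℂ) ^ ((t : ℕ) + (t.succAbove j : ℕ)) * a (I t) * b (I ∘ t.succAbove) *
        conj (a (I (t.succAbove j))) * conj (b (I ∘ (t.succAbove j).succAbove)) =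
      -(a (I t) * conj (b (Fin.cons (I t) (j.removeNth (t.removeNth I)))) *
        conj (a (I (t.succAbove j)) *
          conj (b (Fin.cons (I (t.succAbove j)) (j.removeNth (t.removeNth I)))))) := by
  set s := t.succAbove j
  set K := j.removeNth (t.removeNth I)
  have hbt : b (I ∘ t.succAbove) = (-1) ^ (j : ℕ) * b (Fin.cons (I s) K) :=
    hb.apply_eq_neg_one_pow_mul_cons (t.removeNth I) j
  have hbs : b (I ∘ s.succAbove) = (-1) ^ (j.predAbove t : ℕ) * b (Fin.cons (I t) K) := by
    have hK : K = (j.predAbove t).removeNth (s.removeNth I) :=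
      Fin.removeNth_removeNth_eq_swap I j t
    have hIt : I t = s.removeNth I (j.predAbove t) := by
      rw [Fin.removeNth_apply, Fin.succAbove_succAbove_predAbove]
    rw [hK, hIt]
    exact hb.apply_eq_neg_one_pow_mul_cons (s.removeNth I) _
  have hsign : (-1 : ℂ) ^ ((t : ℕ) + s + j + j.predAbove t) = -1 :=
    (Fin.odd_val_add_succAbove_add_val_add_predAbove t j).neg_one_pow
  rw [hbt, hbs]
  simp only [pow_add, map_mul, map_pow, map_neg, map_one, Complex.conj_conj] at hsign ⊢
  linear_combination
    (a (I t) * conj (a (I s)) * b (Fin.cons (I s) K) * conj (b (Fin.cons (I t) K))) * hsign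

theorem cross_term_nonpositive_general
    (k m : ℕ) (hk : 0 < k)
    (a : Fin m → ℂ) (b : (Fin k → Fin m) → ℂ)
    (halt : ∀ (J : Fin k → Fin m) (σ : Equiv.Perm (Fin k)),
      b (J ∘ σ) = ((Equiv.Perm.sign σ : ℤ) : ℂ) * b J)
    (t s : Fin (k + 1)) (hts : t < s) :
    ∑ I : Fin (k + 1) → Fin m,
        (-1 : ℂ) ^ ((t : ℕ) + (s : ℕ)) * a (I t) * b (I ∘ t.succAbove) *
          (starRingEnd ℂ) (a (I s)) * (starRingEnd ℂ) (b (I ∘ s.succAbove)) =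
      -((∑ J : Fin (k - 1) → Fin m,
          ‖∑ i : Fin m,
            a i * (starRingEnd ℂ)
              (b (fun j => (Fin.cons i J : Fin (k - 1 + 1) → Fin m) (Fin.cast (Nat.succ_pred_eq_of_pos hk).symm j)))‖ ^ 2
            : ℝ) : ℂ) := by
  obtain ⟨n, rfl⟩ : ∃ n, k = n + 1 := ⟨k - 1, (Nat.succ_pred_eq_of_pos hk).symm⟩
  obtain ⟨j, rfl⟩ := Fin.exists_succAbove_eq hts.ne'
  let g : Fin m → (Fin n → Fin m) → ℂ := fun i K => a i * conj (b (Fin.cons i K))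
  rw [sum_congr rfl fun I _ => IsAlternatingFun.cross_term_eq_neg_mul_conj a halt I t j,
    Fin.sum_pi_eq_sum_sum_sum_removeNth_removeNth t j (fun i i' K => -(g i K * conj (g i' K)))]
  simp only [sum_neg_distrib]
  exact congrArg Neg.neg (RCLike.sum_sum_sum_mul_conj_eq_sum_norm_sq g)

theorem cross_term_nonpositive
    (k m : ℕ) (hk : 0 < k) (hm : 0 < m)
    (a : Fin m → ℂ) (b : (Fin k → Fin m) → ℂ)
    (halt : ∀ (J : Fin k → Fin m) (σ : Equiv.Perm (Fin k)),
      b (J ∘ σ) = ((Equiv.Perm.sign σ : ℤ) : ℂ) * b J)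
    (t s : Fin (k + 1)) (hts : t < s) :
    ∑ I : Fin (k + 1) → Fin m,
        (-1 : ℂ) ^ ((t : ℕ) + (s : ℕ)) * a (I t) * b (I ∘ t.succAbove) *
          (starRingEnd ℂ) (a (I s)) * (starRingEnd ℂ) (b (I ∘ s.succAbove)) =
      -((∑ J : Fin (k - 1) → Fin m,
          ‖∑ i : Fin m,
            a i * (starRingEnd ℂ)
              (b (fun j => (Fin.cons i J : Fin (k - 1 + 1) → Fin m) (Fin.cast (Nat.succ_pred_eq_of_pos hk).symm j)))‖ ^ 2
            : ℝ) : ℂ) :=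
  cross_term_nonpositive_general k m hk a b halt t s hts
end

section
/- Let 1 ≤ p < ∞, let A ∈ ℝ^{n×m}, U ∈ ℝ^{n×k}, V ∈ ℝ^{k×m}, and set Δ = A − UV. Then for every tuple J = (j_1, …, j_k) ∈ {1,…,m}^k, |det(V_J)|^p · inf{ ‖A − A_{J'} Y‖_p^p : J' ∈ {1,…,m}^k, Y ∈ ℝ^{k×m} } ≤ Σ_{d=1}^n Σ_{i=1}^m |det(M(d,i,J))|^p, where M(d,i,J) is the (k+1)×(k+1) matrix whose first row is (Δ_{d i}, Δ_{d j_1}, …, Δ_{d j_k}) and whose remaining k rows are given by the columns V_i, V_{j_1}, …, V_{j_k} of V. -/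
open Matrix

section Determinant

variable {R : Type*} [CommRing R] {k : ℕ}

theorem det_cons_cons_zero (a : R) (w : Fin k → R) (B : Matrix (Fin k) (Fin k) R) :
    (of (Fin.cons (Fin.cons a w) fun t => Fin.cons 0 (B t)) :
      Matrix (Fin (k + 1)) (Fin (k + 1)) R).det = a * B.det := by
  rw [det_succ_column_zero, Fin.sum_univ_succ]
  simp only [of_apply, Fin.cons_zero, Fin.cons_succ, mul_zero, zero_mul,
    Finset.sum_const_zero, add_zero, Fin.val_zero, pow_zero, one_mul]
  congr 2

theorem det_cons_cons_mulVec (a : R) (w x : Fin k → R) (B : Matrix (Fin k) (Fin k) R) :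
    (of (Fin.cons (Fin.cons a w) fun t => Fin.cons ((B *ᵥ x) t) (B t)) :
      Matrix (Fin (k + 1)) (Fin (k + 1)) R).det = (a - w ⬝ᵥ x) * B.det := by
  set N : Matrix (Fin (k + 1)) (Fin (k + 1)) R :=
    of (Fin.cons (Fin.cons (a - w ⬝ᵥ x) w) fun t => Fin.cons 0 (B t))
  have hN : (of (Fin.cons (Fin.cons a w) fun t => Fin.cons ((B *ᵥ x) t) (B t)) :
      Matrix (Fin (k + 1)) (Fin (k + 1)) R) =
      N.updateCol 0 fun r => ∑ c, (Fin.cons 1 x : Fin (k + 1) → R) c • N r c := by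
    ext r c
    refine Fin.cases ?_ (fun s => ?_) c <;> refine Fin.cases ?_ (fun t => ?_) r
    · simp [N, Fin.sum_univ_succ, dotProduct, mul_comm]
    · simp [N, Fin.sum_univ_succ, mulVec, dotProduct, mul_comm]
    · simp [N, Fin.succ_ne_zero]
    · simp [N, Fin.succ_ne_zero]
  rw [hN, det_updateCol_sum, Fin.cons_zero, one_smul, det_cons_cons_zero]

end Determinant

theorem sub_submatrix_mul_eq_of_submatrix_mul_eq {R ι κ ρ σ : Type*} [Ring R] [Fintype ρ]
    [Fintype σ] (A : Matrix ι κ R) (U : Matrix ι ρ R) (V : Matrix ρ κ R) (J : σ → κ)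
    (X : Matrix σ κ R) (hX : V.submatrix id J * X = V) :
    (A - U * V) - (A - U * V).submatrix id J * X = A - A.submatrix id J * X := by
  have hsub : (A - U * V).submatrix id J = A.submatrix id J - U * V.submatrix id J := rfl
  rw [hsub, Matrix.sub_mul, Matrix.mul_assoc, hX]
  abel

/-- The matrix `M(d,i,J)` of the statement. -/
def augmentedMatrix {R ι κ : Type*} {k : ℕ} (Δ : Matrix ι κ R) (V : Matrix (Fin k) κ R)
    (J : Fin k → κ) (d : ι) (i : κ) : Matrix (Fin (k + 1)) (Fin (k + 1)) R :=
  of (Fin.cons (Fin.cons (Δ d i) fun s => Δ d (J s)) fun t => Fin.cons (V t i) fun s => V t (J s))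

theorem det_augmentedMatrix {R ι κ : Type*} [CommRing R] [Fintype κ] {k : ℕ}
    (A : Matrix ι κ R) (U : Matrix ι (Fin k) R) (V : Matrix (Fin k) κ R) (J : Fin k → κ)
    (X : Matrix (Fin k) κ R) (hX : V.submatrix id J * X = V) (d : ι) (i : κ) :
    (augmentedMatrix (A - U * V) V J d i).det =
      (A - A.submatrix id J * X) d i * (V.submatrix id J).det := by
  have hcol : ∀ t, V t i = (V.submatrix id J *ᵥ fun s => X s i) t :=
    fun t => (congrFun (congrFun hX t) i).symm
  rw [augmentedMatrix]
  simp_rw [hcol]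
  refine (det_cons_cons_mulVec _ _ (fun s => X s i) (V.submatrix id J)).trans ?_
  rw [← sub_submatrix_mul_eq_of_submatrix_mul_eq A U V J X hX]
  rfl

theorem lpNorm_rpow {n m : ℕ} {p : ℝ} (hp : p ≠ 0) (A : Matrix (Fin n) (Fin m) ℝ) :
    lpNorm p A ^ p = ∑ i, ∑ j, |A i j| ^ p := by
  rw [lpNorm, ← Real.rpow_mul (by positivity), one_div_mul_cancel hp, Real.rpow_one]

theorem weighted_average_column_bound
    (n m k : ℕ) (p : ℝ) (hp : 1 ≤ p)
    (A : Matrix (Fin n) (Fin m) ℝ) (U : Matrix (Fin n) (Fin k) ℝ)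
    (V : Matrix (Fin k) (Fin m) ℝ)
    (Δ : Matrix (Fin n) (Fin m) ℝ) (hΔ : Δ = A - U * V)
    (J : Fin k → Fin m) :
    |(V.submatrix id J).det| ^ p *
        sInf {c : ℝ | ∃ (J' : Fin k → Fin m) (Y : Matrix (Fin k) (Fin m) ℝ),
          c = lpNorm p (A - A.submatrix id J' * Y) ^ p} ≤
      ∑ d : Fin n, ∑ i : Fin m,
        |(Matrix.of (Fin.cons
            (Fin.cons (Δ d i) (fun s => Δ d (J s)))
            (fun t => Fin.cons (V t i) (fun s => V t (J s)))) :
          Matrix (Fin (k + 1)) (Fin (k + 1)) ℝ).det| ^ p := by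
  subst hΔ
  have hp0 : p ≠ 0 := by linarith
  set B := V.submatrix id J
  by_cases hB : B.det = 0
  · rw [hB, abs_zero, Real.zero_rpow hp0, zero_mul]
    positivity
  set X := B⁻¹ * V
  have hX : B * X = V := mul_nonsing_inv_cancel_left B V (isUnit_iff_ne_zero.2 hB)
  calc |B.det| ^ p * sInf _
      ≤ |B.det| ^ p * lpNorm p (A - A.submatrix id J * X) ^ p := by
        gcongr
        exact csInf_le ⟨0, by rintro _ ⟨J', Y, rfl⟩; rw [lpNorm_rpow hp0]; positivity⟩ ⟨J, X, rfl⟩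
    _ = ∑ d, ∑ i, |(augmentedMatrix (A - U * V) V J d i).det| ^ p := by
        simp_rw [lpNorm_rpow hp0, Finset.mul_sum, det_augmentedMatrix A U V J X hX, abs_mul,
          Real.mul_rpow (abs_nonneg _) (abs_nonneg _), mul_comm]
        rfl
end

section
/- Let k ≥ 1 and let H ∈ ℝ^{(k+1)×(k+1)} satisfy: every entry of H is 1 or −1; every entry of the first row of H equals 1; and the columns of H are pairwise orthogonal. Given ε > 0, let A ∈ ℝ^{(k+1)×(k+1)} be the matrix obtained from H by replacing every entry of the first row with ε. Then for every 1 < p < ∞, with q = p/(p−1), for every column index j ∈ {1,…,k+1} and every choice of real coefficients x_i (i ≠ j), ‖A_j − Σ_{i ≠ j} x_i A_i‖_p ≥ (k+1)·ε / (1 + k·ε^q)^{1/q}, where A_i denotes the i-th column of A and the norm is the vector ℓp norm on ℝ^{k+1}. -/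
/-- The ℓp norm of a real vector. -/
noncomputable def vecLpNorm {n : ℕ} (p : ℝ) (v : Fin n → ℝ) : ℝ :=
  (∑ i, |v i| ^ p) ^ (1 / p)

/-!
Hölder duality: for every test vector `u`, `⟪u, v⟫ ≤ ‖v‖_p ‖u‖_q`. Take
`u = (ε⁻¹, H_{1j}, …, H_{kj})`. Rescaling the first coordinate by `ε⁻¹` undoes the
perturbation, so `⟪u, A_c⟫ = ⟪H_j, H_c⟫`, which is `k + 1` for `c = j` and `0` otherwise.
Hence `⟪u, A_j - ∑ x_i A_i⟫ = k + 1` whatever the `x_i`, while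
`‖u‖_q = (ε^{-q} + k)^{1/q} = (1 + k ε^q)^{1/q} / ε`.
-/

open Finset Matrix

theorem dotProduct_div_vecLpNorm_le {n : ℕ} {p q : ℝ} (hpq : p.HolderConjugate q)
    (u v : Fin n → ℝ) (hu : 0 < vecLpNorm q u) :
    u ⬝ᵥ v / vecLpNorm q u ≤ vecLpNorm p v := by
  rw [div_le_iff₀ hu, dotProduct_comm]
  exact Real.inner_le_Lp_mul_Lq univ v u hpq

theorem vecLpNorm_cons_of_abs_eq_one {n : ℕ} (q a : ℝ) (w : Fin n → ℝ)
    (hw : ∀ t, |w t| = 1) :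
    vecLpNorm q (Fin.cons a w : Fin (n + 1) → ℝ) = (|a| ^ q + n) ^ (1 / q) := by
  simp [vecLpNorm, Fin.sum_univ_succ, hw]

theorem inv_rpow_add_rpow_one_div {ε q : ℝ} (hε : 0 < ε) (hq : q ≠ 0) (c : ℝ) (hc : 0 ≤ c) :
    (ε⁻¹ ^ q + c) ^ (1 / q) = (1 + c * ε ^ q) ^ (1 / q) / ε := by
  have hεq : 0 < ε ^ q := Real.rpow_pos_of_pos hε q
  have hsum : ε⁻¹ ^ q + c = (1 + c * ε ^ q) / ε ^ q := by
    rw [Real.inv_rpow hε.le]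
    field_simp
  rw [hsum, Real.div_rpow (by positivity) hεq.le, ← Real.rpow_mul hε.le,
    mul_one_div_cancel hq, Real.rpow_one]

theorem dotProduct_col_sub_sum {m n : Type*} [Fintype m] (u : m → ℝ) (A : Matrix m n ℝ)
    (j : n) (s : Finset n) (x : n → ℝ) :
    u ⬝ᵥ (fun d => A d j - ∑ i ∈ s, x i * A d i) = u ⬝ᵥ A.col j - ∑ i ∈ s, x i * u ⬝ᵥ A.col i := by
  simp only [dotProduct, col_apply, mul_sub, sum_sub_distrib, mul_sum]
  rw [sum_comm]
  simp only [mul_left_comm]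

theorem dotProduct_col_self_of_sign {m n : Type*} [Fintype m] (H : Matrix m n ℝ) (j : n)
    (hpm : ∀ i, H i j = 1 ∨ H i j = -1) :
    H.col j ⬝ᵥ H.col j = Fintype.card m := by
  have hsq : ∀ i, H i j * H i j = 1 := fun i => by
    rcases hpm i with h | h <;> simp [h]
  simp [dotProduct, hsq]

theorem cons_inv_dotProduct_col {k : ℕ} (H A : Matrix (Fin (k + 1)) (Fin (k + 1)) ℝ)
    (hrow : ∀ j, H 0 j = 1) {ε : ℝ} (hε : ε ≠ 0) (hA0 : ∀ j, A 0 j = ε)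
    (hAi : ∀ i j, i ≠ 0 → A i j = H i j) (j c : Fin (k + 1)) :
    (Fin.cons ε⁻¹ (fun t => H t.succ j) : Fin (k + 1) → ℝ) ⬝ᵥ A.col c = H.col j ⬝ᵥ H.col c := by
  simp [dotProduct, Fin.sum_univ_succ, hA0, hrow, hAi _ _ (Fin.succ_ne_zero _), hε]

theorem perturbed_hadamard_column_distance_lower_bound_general
    (k : ℕ)
    (H : Matrix (Fin (k + 1)) (Fin (k + 1)) ℝ)
    (hpm : ∀ i j, H i j = 1 ∨ H i j = -1)
    (hrow : ∀ j, H 0 j = 1)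
    (horth : ∀ i j, i ≠ j → ∑ d, H d i * H d j = 0)
    (ε : ℝ) (hε : 0 < ε)
    (A : Matrix (Fin (k + 1)) (Fin (k + 1)) ℝ)
    (hA0 : ∀ j, A 0 j = ε)
    (hAi : ∀ i j, i ≠ 0 → A i j = H i j)
    (p : ℝ) (hp : 1 < p) (q : ℝ) (hq : q = p / (p - 1))
    (j : Fin (k + 1)) (x : Fin (k + 1) → ℝ) :
    ((k : ℝ) + 1) * ε / (1 + (k : ℝ) * ε ^ q) ^ (1 / q) ≤
      vecLpNorm p (fun d => A d j - ∑ i ∈ Finset.univ.erase j, x i * A d i) := by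
  have hpq : p.HolderConjugate q := hq ▸ Real.HolderConjugate.conjExponent hp
  set u : Fin (k + 1) → ℝ := Fin.cons ε⁻¹ (fun t => H t.succ j)
  have hu_col := cons_inv_dotProduct_col H A hrow hε.ne' hA0 hAi j
  have hpair : u ⬝ᵥ (fun d => A d j - ∑ i ∈ univ.erase j, x i * A d i) = k + 1 := by
    rw [dotProduct_col_sub_sum, hu_col, dotProduct_col_self_of_sign H j (hpm · j),
      sum_eq_zero fun i hi => by
        rw [hu_col, show H.col j ⬝ᵥ H.col i = 0 from horth j i (ne_of_mem_erase hi).symm, mul_zero]]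
    simp
  have hnorm : vecLpNorm q u = (1 + k * ε ^ q) ^ (1 / q) / ε := by
    have hsign : ∀ t : Fin k, |H t.succ j| = 1 := fun t => by
      rcases hpm t.succ j with h | h <;> simp [h]
    rw [vecLpNorm_cons_of_abs_eq_one q _ _ hsign, abs_inv, abs_of_pos hε,
      inv_rpow_add_rpow_one_div hε hpq.symm.ne_zero _ k.cast_nonneg]
  have hholder := dotProduct_div_vecLpNorm_le hpq u
    (fun d => A d j - ∑ i ∈ univ.erase j, x i * A d i) (by rw [hnorm]; positivity)
  rw [hpair, hnorm] at hholder
  calc ((k : ℝ) + 1) * ε / (1 + k * ε ^ q) ^ (1 / q)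
      = (k + 1) / ((1 + k * ε ^ q) ^ (1 / q) / ε) := by field_simp
    _ ≤ _ := hholder

theorem perturbed_hadamard_column_distance_lower_bound
    (k : ℕ) (hk : 1 ≤ k)
    (H : Matrix (Fin (k + 1)) (Fin (k + 1)) ℝ)
    (hpm : ∀ i j, H i j = 1 ∨ H i j = -1)
    (hrow : ∀ j, H 0 j = 1)
    (horth : ∀ i j, i ≠ j → ∑ d, H d i * H d j = 0)
    (ε : ℝ) (hε : 0 < ε)
    (A : Matrix (Fin (k + 1)) (Fin (k + 1)) ℝ)
    (hA0 : ∀ j, A 0 j = ε)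
    (hAi : ∀ i j, i ≠ 0 → A i j = H i j)
    (p : ℝ) (hp : 1 < p) (q : ℝ) (hq : q = p / (p - 1))
    (j : Fin (k + 1)) (x : Fin (k + 1) → ℝ) :
    ((k : ℝ) + 1) * ε / (1 + (k : ℝ) * ε ^ q) ^ (1 / q) ≤
      vecLpNorm p (fun d => A d j - ∑ i ∈ Finset.univ.erase j, x i * A d i) :=
  perturbed_hadamard_column_distance_lower_bound_general k H hpm hrow horth ε hε A hA0 hAi p hp q hq
    j x
end

section
/- Let k ≥ 1 and let H ∈ ℝ^{(k+1)×(k+1)} satisfy: every entry of H is 1 or −1; every entry of the first row of H equals 1; and the columns of H are pairwise orthogonal. Given ε > 0, let A ∈ ℝ^{(k+1)×(k+1)} be the matrix obtained from H by replacing every entry of the first row with ε. Then for every 1 < p < ∞, with q = p/(p−1), for every column index j ∈ {1,…,k+1} and every Y ∈ ℝ^{k×(k+1)}, ‖A − A_{−j} Y‖_p ≥ ( (k+1)^{1−1/p} / (1 + k·ε^q)^{1/q} ) · inf{ ‖A − X‖_p : X ∈ ℝ^{(k+1)×(k+1)}, rank(X) ≤ k }, where A_{−j} ∈ ℝ^{(k+1)×k}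 denotes the matrix A with its j-th column removed. -/
set_option maxHeartbeats 1000000 in
theorem perturbed_hadamard_css_lower_bound
    (k : ℕ) (hk : 1 ≤ k)
    (H : Matrix (Fin (k + 1)) (Fin (k + 1)) ℝ)
    (hpm : ∀ i j, H i j = 1 ∨ H i j = -1)
    (hrow : ∀ j, H 0 j = 1)
    (horth : ∀ i j, i ≠ j → ∑ d, H d i * H d j = 0)
    (ε : ℝ) (hε : 0 < ε)
    (A : Matrix (Fin (k + 1)) (Fin (k + 1)) ℝ)
    (hA0 : ∀ j, A 0 j = ε)
    (hAi : ∀ i j, i ≠ 0 → A i j = H i j)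
    (p : ℝ) (hp : 1 < p) (q : ℝ) (hq : q = p / (p - 1))
    (j : Fin (k + 1)) (Y : Matrix (Fin k) (Fin (k + 1)) ℝ) :
    (((k : ℝ) + 1) ^ (1 - 1 / p) / (1 + (k : ℝ) * ε ^ q) ^ (1 / q)) *
        sInf {c : ℝ | ∃ X : Matrix (Fin (k + 1)) (Fin (k + 1)) ℝ,
          X.rank ≤ k ∧ c = lpNorm p (A - X)} ≤
      lpNorm p (A - A.submatrix id j.succAbove * Y) := by
  have hpq : p.HolderConjugate q := (Real.holderConjugate_iff_eq_conjExponent hp).2 hq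
  have hp0 : (0:ℝ) < p := hpq.pos
  have hq0 : (0:ℝ) < q := hpq.symm.pos
  have hk1 : (0:ℝ) < (k:ℝ) + 1 := by positivity
  -- the dual vector
  set z : Fin (k + 1) → ℝ := fun d => if d = 0 then ε⁻¹ else H d j with hz_def
  -- inner product of z with columns of A
  have hzA : ∀ i : Fin (k + 1), ∑ d, z d * A d i
      = if i = j then ((k:ℝ) + 1) else 0 := by
    intro i
    have h0 : z 0 * A 0 i = 1 := by
      simp [hz_def, hA0, inv_mul_cancel₀ hε.ne']
    have hsum : ∑ t : Fin k, z t.succ * A t.succ i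
        = ∑ t : Fin k, H t.succ j * H t.succ i := by
      refine Finset.sum_congr rfl fun t _ => ?_
      simp [hz_def, Fin.succ_ne_zero t, hAi _ _ (Fin.succ_ne_zero t)]
    have hHfull : ∑ d, H d j * H d i
        = 1 + ∑ t : Fin k, H t.succ j * H t.succ i := by
      rw [Fin.sum_univ_succ, hrow i, hrow j]; ring_nf
    rw [Fin.sum_univ_succ, h0, hsum]
    by_cases hij : i = j
    · subst hij
      have : ∑ d, H d i * H d i = (k:ℝ) + 1 := by
        have : ∀ d, H d i * H d i = 1 := by
          intro d; rcases hpm d i with h | h <;> rw [h] <;> norm_num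
        simp [this, Finset.card_univ]
      have h2 : ∑ t : Fin k, H t.succ i * H t.succ i = (k:ℝ) := by
        have := hHfull.symm.trans this; linarith
      simp [h2]; ring
    · have h2 : ∑ t : Fin k, H t.succ j * H t.succ i = -1 := by
        have := hHfull.symm.trans (horth j i (fun h => hij h.symm))
        linarith
      simp [h2, hij]
  -- the q-norm of z
  have hzq : (∑ d, |z d| ^ q) = ε⁻¹ ^ q + (k:ℝ) := by
    rw [Fin.sum_univ_succ]
    have h0 : |z 0| ^ q = ε⁻¹ ^ q := by
      simp [hz_def, abs_of_pos (inv_pos.2 hε)]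
    have h1 : ∀ t : Fin k, |z t.succ| ^ q = 1 := by
      intro t
      have : |H t.succ j| = 1 := by
        rcases hpm t.succ j with h | h <;> rw [h] <;> norm_num
      simp [hz_def, Fin.succ_ne_zero t, this]
    simp [h0, h1, Finset.card_univ]
  -- lower bound on the RHS via Hölder
  set M := A - A.submatrix id j.succAbove * Y with hM_def
  have hzM : ∑ d, z d * M d j = (k:ℝ) + 1 := by
    have : ∀ d, z d * M d j
        = z d * A d j - ∑ t : Fin k, (z d * A d (j.succAbove t)) * Y t j := by
      intro d
      simp only [hM_def, Matrix.sub_apply, Matrix.mul_apply, Matrix.submatrix_apply, id]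
      rw [mul_sub, Finset.mul_sum]; ring_nf
    rw [Finset.sum_congr rfl fun d _ => this d, Finset.sum_sub_distrib,
      Finset.sum_comm]
    have h1 : ∑ d, z d * A d j = (k:ℝ) + 1 := by rw [hzA j]; simp
    have h2 : ∀ t : Fin k, ∑ d, (z d * A d (j.succAbove t)) * Y t j = 0 := by
      intro t
      rw [← Finset.sum_mul]
      rw [hzA (j.succAbove t)]
      simp [Fin.succAbove_ne j t]
    simp [h1, h2]
  have hDpos : (0:ℝ) < (ε⁻¹ ^ q + (k:ℝ)) ^ (1/q) := by positivity
  have hcol : ((k:ℝ) + 1) / (ε⁻¹ ^ q + (k:ℝ)) ^ (1/q)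
      ≤ (∑ d, |M d j| ^ p) ^ (1/p) := by
    rw [div_le_iff₀ hDpos]
    have := Real.inner_le_Lp_mul_Lq Finset.univ (fun d => M d j) z hpq
    rw [← hzq]
    calc (k:ℝ) + 1 = ∑ d, M d j * z d := by
          rw [← hzM]; exact Finset.sum_congr rfl fun d _ => (mul_comm _ _)
      _ ≤ (∑ d, |M d j| ^ p) ^ (1/p) * (∑ d, |z d| ^ q) ^ (1/q) := this
  have hRHS : ((k:ℝ) + 1) / (ε⁻¹ ^ q + (k:ℝ)) ^ (1/q) ≤ lpNorm p M := by
    refine hcol.trans ?_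
    unfold lpNorm
    apply Real.rpow_le_rpow (by positivity) ?_ (by positivity)
    apply Finset.sum_le_sum
    intro i _
    exact Finset.single_le_sum (f := fun j' => |M i j'| ^ p)
      (fun j' _ => by positivity) (Finset.mem_univ j)
  -- the rank-k witness
  set Q : Matrix (Fin k) (Fin (k + 1)) ℝ := fun t j' => A t.succ j' with hQ_def
  set P : Matrix (Fin (k + 1)) (Fin k) ℝ := fun i t => if i = t.succ then 1 else 0
    with hP_def
  set X₀ := P * Q with hX₀_def
  have hX₀ : ∀ i j', X₀ i j' = if i = 0 then 0 else A i j' := by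
    intro i j'
    rw [hX₀_def, Matrix.mul_apply]
    refine Fin.cases ?_ ?_ i
    · simp [hP_def, (Fin.succ_ne_zero _).symm]
    · intro s
      simp [hP_def, hQ_def, Fin.succ_inj, Fin.succ_ne_zero s]
  have hrank : X₀.rank ≤ k :=
    le_trans (Matrix.rank_mul_le_right P Q)
      (le_trans (Matrix.rank_le_card_height Q) (by simp))
  have hval : lpNorm p (A - X₀) = ((k:ℝ) + 1) ^ (1/p) * ε := by
    unfold lpNorm
    have hentry : ∀ i j', |((A - X₀) i j')| ^ p = if i = 0 then ε ^ p else 0 := by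
      intro i j'
      rcases eq_or_ne i 0 with h | h
      · simp [h, hX₀, hA0, abs_of_pos hε]
      · simp [hX₀, h, Real.zero_rpow hp0.ne']
    have hrow0 : ∀ i, (∑ j', |((A - X₀) i j')| ^ p)
        = if i = 0 then ((k:ℝ) + 1) * ε ^ p else 0 := by
      intro i
      rw [Finset.sum_congr rfl fun j' _ => hentry i j']
      rcases eq_or_ne i 0 with h | h
      · simp [h, Finset.card_univ]
        try ring
      · simp [h]
    have hsum : (∑ i, ∑ j', |((A - X₀) i j')| ^ p) = ((k:ℝ) + 1) * ε ^ p := by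
      rw [Finset.sum_congr rfl fun i _ => hrow0 i, Fin.sum_univ_succ]
      simp [Fin.succ_ne_zero]
    rw [hsum, Real.mul_rpow hk1.le (by positivity), ← Real.rpow_mul hε.le,
      mul_one_div_cancel hp0.ne', Real.rpow_one]
  -- bound on the infimum
  set S : Set ℝ := {c : ℝ | ∃ X : Matrix (Fin (k + 1)) (Fin (k + 1)) ℝ,
      X.rank ≤ k ∧ c = lpNorm p (A - X)} with hS_def
  have hbdd : BddBelow S := by
    refine ⟨0, fun c hc => ?_⟩
    obtain ⟨X, _, rfl⟩ := hc
    exact Real.rpow_nonneg (Finset.sum_nonneg fun i _ => Finset.sum_nonneg fun j' _ =>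
      Real.rpow_nonneg (abs_nonneg _) _) _
  have hmem : lpNorm p (A - X₀) ∈ S := ⟨X₀, hrank, rfl⟩
  have hInf : sInf S ≤ ((k:ℝ) + 1) ^ (1/p) * ε := le_of_le_of_eq (csInf_le hbdd hmem) hval
  -- final arithmetic
  have hfac0 : (0:ℝ) ≤ ((k:ℝ) + 1) ^ (1 - 1/p) / (1 + (k:ℝ) * ε ^ q) ^ (1/q) := by
    positivity
  refine le_trans (mul_le_mul_of_nonneg_left hInf hfac0) ?_
  refine le_trans (le_of_eq ?_) hRHS
  have hden : (1 + (k:ℝ) * ε ^ q) ^ (1/q) = ε * (ε⁻¹ ^ q + (k:ℝ)) ^ (1/q) := by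
    have h1 : (1:ℝ) + (k:ℝ) * ε ^ q = ε ^ q * (ε⁻¹ ^ q + (k:ℝ)) := by
      rw [mul_add, ← Real.mul_rpow hε.le (by positivity), mul_inv_cancel₀ hε.ne',
        Real.one_rpow]
      ring
    rw [h1, Real.mul_rpow (by positivity) (by positivity), ← Real.rpow_mul hε.le,
      mul_one_div_cancel hq0.ne', Real.rpow_one]
  have hpow : ((k:ℝ) + 1) ^ (1 - 1/p) * ((k:ℝ) + 1) ^ (1/p) = (k:ℝ) + 1 := by
    rw [← Real.rpow_add hk1]
    norm_num
  rw [hden, div_mul_eq_mul_div, div_eq_div_iff (by positivity) (by positivity)]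
  calc ((k:ℝ) + 1) ^ (1 - 1/p) * (((k:ℝ) + 1) ^ (1/p) * ε) * (ε⁻¹ ^ q + (k:ℝ)) ^ (1/q)
      = (((k:ℝ) + 1) ^ (1 - 1/p) * ((k:ℝ) + 1) ^ (1/p)) * (ε * (ε⁻¹ ^ q + (k:ℝ)) ^ (1/q)) := by
        ring
    _ = ((k:ℝ) + 1) * (ε * (ε⁻¹ ^ q + (k:ℝ)) ^ (1/q)) := by rw [hpow]
end
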